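/- arXiv:1609.00089 — 7 statements merged into one kernel-verified Lean document; each statement's English description precedes it below -/
import Mathlib

section
/- Any even cycle in a signed graph is a reducing closed walk; moreover, if C and C' are two odd cycles in a signed graph sharing a vertex, then their union contains an even cycle. -/
open Finset

/-- A signed graph: an undirected graph (possibly with loops) together with a
sign attached to each edge. -/
structure SignedGraph (V : Type) where
  edges : Finset (Sym2 V)
  sgn : Sym2 V → ℤ

namespace SignedGraph

variable {V : Type} [DecidableEq V]

/-- The sign function takes only the values `1` and `-1` on edges. -/
def Proper (G : SignedGraph V) : Prop :=
  ∀ e ∈ G.edges, G.sgn e = 1 ∨ G.sgn e = -1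

/-- `e_i + e_j` for the edge `ij` (a loop `ii` gives `2 e_i`). -/
def endSum : Sym2 V → (V → ℤ) :=
  Sym2.lift ⟨fun i j => Pi.single i 1 + Pi.single j 1, fun i j => add_comm _ _⟩

/-- `ρ(±ij) = sgn(ij)(e_i + e_j)`. -/
def rho (G : SignedGraph V) (e : Sym2 V) : V → ℤ := G.sgn e • endSum e

/-- A walk of length `len` in `G`, recorded by its vertex sequence. -/
structure Walk (G : SignedGraph V) (len : ℕ) where
  vert : ℕ → V
  mem : ∀ i < len, s(vert i, vert (i + 1)) ∈ G.edges

namespace Walk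

variable {G : SignedGraph V} {l l₁ l₂ : ℕ}

/-- The `i`-th edge of a walk. -/
def edge (W : G.Walk l) (i : ℕ) : Sym2 V := s(W.vert i, W.vert (i + 1))

def IsClosed (W : G.Walk l) : Prop := W.vert l = W.vert 0

/-- A cycle: a closed walk of positive length with pairwise distinct vertices
(length 2 is excluded since it would repeat an edge). -/
def IsCycle (W : G.Walk l) : Prop :=
  W.IsClosed ∧ 0 < l ∧ l ≠ 2 ∧ ∀ i < l, ∀ j < l, W.vert i = W.vert j → i = j

/-- A path: a walk with pairwise distinct vertices. -/
def IsPath (W : G.Walk l) : Prop :=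
  ∀ i ≤ l, ∀ j ≤ l, W.vert i = W.vert j → i = j

/-- The signs of consecutive edges alternate along the walk. -/
def Alternating (W : G.Walk l) : Prop :=
  ∀ i, i + 1 < l → G.sgn (W.edge (i + 1)) = -G.sgn (W.edge i)

/-- The signature of the vertex at position `i` of a cycle: the average of the
signs of the two incident edges of the cycle. -/
def sig (W : G.Walk l) (i : ℕ) : ℤ :=
  (G.sgn (W.edge ((i + l - 1) % l)) + G.sgn (W.edge (i % l))) / 2

/-- The exponent vector `∑_{v ∈ C} sig_C(v)·e_v` of the monomial
`∏_{v ∈ C} x_v^{sig_C(v)}` attached to a cycle. -/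
def cycVec (W : G.Walk l) : V → ℤ :=
  fun v => ∑ i ∈ Finset.range l, if W.vert i = v then W.sig i else 0

def edgeFinset (W : G.Walk l) : Finset (Sym2 V) := (Finset.range l).image W.edge

def edgeMS (W : G.Walk l) : Multiset (Sym2 V) := ((List.range l).map W.edge : Multiset (Sym2 V))

def HasVert (W : G.Walk l) (v : V) : Prop := ∃ i < l, W.vert i = v

/-- A reducing closed walk: a closed walk of even length such that whenever an
edge appears at two positions, the number of edges strictly between the two
occurrences is odd. -/
def ReducingClosedWalk (W : G.Walk l) : Prop :=
  W.IsClosed ∧ Even l ∧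
    ∀ i j, i < j → j < l → W.edge i = W.edge j → Odd (j - i - 1)

end Walk

/-- Two vertices lie in the same component iff some walk joins them. -/
def SameComponent (G : SignedGraph V) (u v : V) : Prop :=
  ∃ (n : ℕ) (W : G.Walk n), W.vert 0 = u ∧ W.vert n = v

/-- Two cycles are (vertex-)disjoint. -/
def DisjointCycles {G : SignedGraph V} {l₁ l₂ : ℕ} (C : G.Walk l₁) (C' : G.Walk l₂) : Prop :=
  ∀ i < l₁, ∀ j < l₂, C.vert i ≠ C'.vert j

/-- There is a sign-alternating path from a vertex of `C` to a vertex of `C'`. -/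
def AltPathBetween (G : SignedGraph V) {l₁ l₂ : ℕ} (C : G.Walk l₁) (C' : G.Walk l₂) : Prop :=
  ∃ (p : ℕ) (P : G.Walk p), P.IsPath ∧ P.Alternating ∧
    (∃ i < l₁, P.vert 0 = C.vert i) ∧ (∃ j < l₂, P.vert p = C'.vert j)

/-- The odd cycle condition for signed graphs. -/
def OddCycleCondition (G : SignedGraph V) : Prop :=
  ∀ (l₁ l₂ : ℕ) (C : G.Walk l₁) (C' : G.Walk l₂),
    C.IsCycle → C'.IsCycle → Odd l₁ → Odd l₂ → DisjointCycles C C' →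
    G.SameComponent (C.vert 0) (C'.vert 0) → AltPathBetween G C C'

end SignedGraph

/-- The monomial `x^z` in the Laurent polynomial ring
`k[x_v^{±1} : v ∈ V] = k[(V → ℤ)]`. -/
noncomputable def mono (k : Type) [Field k] {V : Type} (z : V → ℤ) :
    AddMonoidAlgebra k (V → ℤ) :=
  AddMonoidAlgebra.single z 1

/-- The edge ring `k[G]` of a signed graph, generated by the monomials
`(x_i x_j)^{sgn(ij)}` over the edges of `G`. -/
noncomputable def edgeRing (k : Type) [Field k] {V : Type} [DecidableEq V] (G : SignedGraph V) :
    Subalgebra k (AddMonoidAlgebra k (V → ℤ)) :=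
  Algebra.adjoin k ((fun e => mono k (G.rho e)) '' ↑G.edges)
namespace SignedGraph

variable {V : Type} [DecidableEq V] {G : SignedGraph V}

namespace Walk

/-- membership in edgeFinset -/
lemma mem_edgeFinset {l : ℕ} {W : G.Walk l} {e : Sym2 V} :
    e ∈ W.edgeFinset ↔ ∃ i < l, W.edge i = e := by
  simp [edgeFinset, Finset.mem_image, Finset.mem_range]

lemma vert_mod {l : ℕ} {W : G.Walk l} (hW : W.IsClosed) (hl : 0 < l) :
    ∀ i ≤ l, W.vert i = W.vert (i % l) := by
  intro i hi
  rcases eq_or_lt_of_le hi with rfl | h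
  · rw [Nat.mod_self]; exact hW
  · rw [Nat.mod_eq_of_lt h]

/-- vertex injectivity on a cycle, allowing index `l`. -/
lemma cyc_vert_inj {l : ℕ} {W : G.Walk l} (hW : W.IsCycle) :
    ∀ i ≤ l, ∀ j ≤ l, W.vert i = W.vert j → i % l = j % l := by
  obtain ⟨hcl, hpos, -, hinj⟩ := hW
  intro i hi j hj h
  rw [vert_mod hcl hpos i hi, vert_mod hcl hpos j hj] at h
  exact hinj _ (Nat.mod_lt _ hpos) _ (Nat.mod_lt _ hpos) h

/-- edge injectivity on a cycle. -/
lemma cyc_edge_inj {l : ℕ} {W : G.Walk l} (hW : W.IsCycle) :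
    ∀ i < l, ∀ j < l, W.edge i = W.edge j → i = j := by
  intro i hi j hj he
  have hpos := hW.2.1
  have hne2 := hW.2.2.1
  rw [edge, edge, Sym2.eq_iff] at he
  rcases he with ⟨h1, -⟩ | ⟨h1, h2⟩
  · have := cyc_vert_inj hW i (le_of_lt hi) j (le_of_lt hj) h1
    rwa [Nat.mod_eq_of_lt hi, Nat.mod_eq_of_lt hj] at this
  · have e1 := cyc_vert_inj hW i (le_of_lt hi) (j+1) hj h1
    have e2 := cyc_vert_inj hW (i+1) hi j (le_of_lt hj) h2
    rw [Nat.mod_eq_of_lt hi] at e1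
    rw [Nat.mod_eq_of_lt hj] at e2
    rcases eq_or_lt_of_le (Nat.succ_le_of_lt hj) with hj1 | hj1
    · have hl : l = j + 1 := by omega
      subst hl
      rw [Nat.mod_self] at e1
      subst e1
      rcases eq_or_lt_of_le (Nat.one_le_iff_ne_zero.mpr (by omega : j + 1 ≠ 0)) with h1l | h1l
      · omega
      · rw [Nat.mod_eq_of_lt (by omega : 0 + 1 < j + 1)] at e2; omega
    · rw [Nat.mod_eq_of_lt hj1] at e1
      subst e1
      rcases Nat.lt_trichotomy (j + 2) l with h2l | h2l | h2l
      · rw [Nat.mod_eq_of_lt h2l] at e2; omega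
      · rw [← h2l, Nat.mod_self] at e2; omega
      · omega

end Walk

end SignedGraph
namespace SignedGraph

variable {V : Type} [DecidableEq V] {G : SignedGraph V}

namespace Walk

/-- Rotation of a closed walk. -/
def rot {l : ℕ} (W : G.Walk l) (hW : W.IsClosed) (hl : 0 < l) (k : ℕ) : G.Walk l where
  vert i := W.vert ((i + k) % l)
  mem i hi := by
    show s(W.vert ((i + k) % l), W.vert ((i + 1 + k) % l)) ∈ G.edges
    have hj : (i + k) % l < l := Nat.mod_lt _ hl
    have hmod : (i + 1 + k) % l = ((i + k) % l + 1) % l := by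
      rw [Nat.add_right_comm i 1 k, ← Nat.mod_add_mod]
    have hv : W.vert (((i + k) % l + 1) % l) = W.vert ((i + k) % l + 1) :=
      (vert_mod hW hl _ (by omega)).symm
    rw [hmod, hv]
    exact W.mem _ hj

lemma rot_vert {l : ℕ} (W : G.Walk l) (hW : W.IsClosed) (hl : 0 < l) (k i : ℕ) :
    (W.rot hW hl k).vert i = W.vert ((i + k) % l) := rfl

lemma rot_edge {l : ℕ} (W : G.Walk l) (hW : W.IsClosed) (hl : 0 < l) (k : ℕ) (i : ℕ) :
    (W.rot hW hl k).edge i = W.edge ((i + k) % l) := by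
  have hj : (i + k) % l < l := Nat.mod_lt _ hl
  have hmod : (i + 1 + k) % l = ((i + k) % l + 1) % l := by
    rw [Nat.add_right_comm i 1 k, ← Nat.mod_add_mod]
  have hv : W.vert (((i + k) % l + 1) % l) = W.vert ((i + k) % l + 1) :=
    (vert_mod hW hl _ (by omega)).symm
  show s(W.vert ((i + k) % l), W.vert ((i + 1 + k) % l)) = _
  rw [hmod, hv]
  rfl

lemma rot_closed {l : ℕ} (W : G.Walk l) (hW : W.IsClosed) (hl : 0 < l) (k : ℕ) :
    (W.rot hW hl k).IsClosed := by
  show W.vert ((l + k) % l) = W.vert ((0 + k) % l)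
  rw [Nat.add_comm l k, Nat.add_mod_right, Nat.zero_add]

/-- Concatenation of two walks. -/
def cat {m n : ℕ} (A : G.Walk m) (B : G.Walk n) (h : A.vert m = B.vert 0) :
    G.Walk (m + n) where
  vert i := if i < m then A.vert i else B.vert (i - m)
  mem i hi := by
    rcases Nat.lt_trichotomy (i + 1) m with h1 | h1 | h1
    · simp only [if_pos (by omega : i < m), if_pos h1]
      exact A.mem i (by omega)
    · simp only [if_pos (by omega : i < m), if_neg (by omega : ¬ i + 1 < m)]
      have : B.vert (i + 1 - m) = A.vert (i + 1) := by rw [show i + 1 - m = 0 by omega, ← h, h1]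
      rw [this]
      exact A.mem i (by omega)
    · simp only [if_neg (by omega : ¬ i < m), if_neg (by omega : ¬ i + 1 < m)]
      have : i + 1 - m = (i - m) + 1 := by omega
      rw [this]
      exact B.mem (i - m) (by omega)

lemma cat_vert_lt {m n : ℕ} (A : G.Walk m) (B : G.Walk n) (h : A.vert m = B.vert 0)
    {i : ℕ} (hi : i < m) : (A.cat B h).vert i = A.vert i := if_pos hi

lemma cat_vert_ge {m n : ℕ} (A : G.Walk m) (B : G.Walk n) (h : A.vert m = B.vert 0)
    {i : ℕ} (hi : m ≤ i) : (A.cat B h).vert i = B.vert (i - m) := if_neg (by omega)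

lemma cat_vert_zero {m n : ℕ} (A : G.Walk m) (B : G.Walk n) (h : A.vert m = B.vert 0) :
    (A.cat B h).vert 0 = A.vert 0 := by
  rcases Nat.eq_zero_or_pos m with rfl | hm
  · rw [cat_vert_ge A B h (le_refl 0), h]
  · exact cat_vert_lt A B h hm

lemma cat_vert_last {m n : ℕ} (A : G.Walk m) (B : G.Walk n) (h : A.vert m = B.vert 0) :
    (A.cat B h).vert (m + n) = B.vert n := by
  rw [cat_vert_ge A B h (Nat.le_add_right m n), Nat.add_sub_cancel_left]

lemma cat_edge_lt {m n : ℕ} (A : G.Walk m) (B : G.Walk n) (h : A.vert m = B.vert 0)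
    {i : ℕ} (hi : i < m) : (A.cat B h).edge i = A.edge i := by
  unfold edge
  rcases Nat.lt_or_ge (i + 1) m with h1 | h1
  · rw [cat_vert_lt A B h hi, cat_vert_lt A B h h1]
  · have h2 : i + 1 = m := by omega
    rw [cat_vert_lt A B h hi, cat_vert_ge A B h h1, show i + 1 - m = 0 by omega, ← h, h2]

lemma cat_edge_ge {m n : ℕ} (A : G.Walk m) (B : G.Walk n) (h : A.vert m = B.vert 0)
    {i : ℕ} (hi : m ≤ i) : (A.cat B h).edge i = B.edge (i - m) := by
  unfold edge
  rw [cat_vert_ge A B h hi, cat_vert_ge A B h (by omega : m ≤ i + 1),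
    show i + 1 - m = (i - m) + 1 by omega]

/-- Reversal of a walk. -/
def rev {n : ℕ} (W : G.Walk n) : G.Walk n where
  vert i := W.vert (n - i)
  mem i hi := by
    show s(W.vert (n - i), W.vert (n - (i + 1))) ∈ G.edges
    have h1 : n - i = (n - (i + 1)) + 1 := by omega
    rw [h1, Sym2.eq_swap]
    exact W.mem _ (by omega)

lemma rev_vert {n : ℕ} (W : G.Walk n) (i : ℕ) : W.rev.vert i = W.vert (n - i) := rfl

lemma rev_edge {n : ℕ} (W : G.Walk n) {i : ℕ} (hi : i < n) :
    W.rev.edge i = W.edge (n - 1 - i) := by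
  show s(W.vert (n - i), W.vert (n - (i + 1))) = _
  rw [show n - i = (n - 1 - i) + 1 by omega, show n - (i + 1) = n - 1 - i by omega, Sym2.eq_swap]
  rfl

/-- Segment of a walk, from position `a`, of length `t`. -/
def seg {n : ℕ} (W : G.Walk n) (a t : ℕ) (h : a + t ≤ n) : G.Walk t where
  vert i := W.vert (a + i)
  mem i hi := by
    show s(W.vert (a + i), W.vert (a + (i + 1))) ∈ G.edges
    rw [← Nat.add_assoc]
    exact W.mem (a + i) (by omega)

lemma seg_vert {n : ℕ} (W : G.Walk n) (a t : ℕ) (h : a + t ≤ n) (i : ℕ) :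
    (W.seg a t h).vert i = W.vert (a + i) := rfl

lemma seg_edge {n : ℕ} (W : G.Walk n) (a t : ℕ) (h : a + t ≤ n) (i : ℕ) :
    (W.seg a t h).edge i = W.edge (a + i) := by
  show s(W.vert (a + i), W.vert (a + (i + 1))) = _
  rw [← Nat.add_assoc]
  rfl

/-- mod-shift injectivity helper -/
lemma mod_shift_inj {l k i j : ℕ} (hi : i < l) (hj : j < l)
    (h : (i + k) % l = (j + k) % l) : i = j := by
  have : i % l = j % l := Nat.ModEq.add_right_cancel' k h
  rwa [Nat.mod_eq_of_lt hi, Nat.mod_eq_of_lt hj] at this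

end Walk

end SignedGraph
namespace SignedGraph

variable {V : Type} [DecidableEq V] {G : SignedGraph V}

namespace Walk

lemma hasVert_of_edge_mem {l : ℕ} {W : G.Walk l} (hW : W.IsClosed) {a b : V}
    (h : s(a, b) ∈ W.edgeFinset) : W.HasVert a ∧ W.HasVert b := by
  rw [mem_edgeFinset] at h
  obtain ⟨i, hi, he⟩ := h
  have hv1 : W.HasVert (W.vert i) := ⟨i, hi, rfl⟩
  have hv2 : W.HasVert (W.vert (i + 1)) := by
    rcases eq_or_lt_of_le (Nat.succ_le_of_lt hi) with h' | h'
    · exact ⟨0, by omega, by rw [show i + 1 = l from h']; exact hW.symm⟩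
    · exact ⟨i + 1, h', rfl⟩
  rw [edge, Sym2.eq_iff] at he
  rcases he with ⟨h1, h2⟩ | ⟨h1, h2⟩
  · rw [← h1, ← h2]; exact ⟨hv1, hv2⟩
  · rw [← h1, ← h2]; exact ⟨hv2, hv1⟩

lemma key {l₁ l₂ : ℕ} {C : G.Walk l₁} {C' : G.Walk l₂} (hC : C.IsCycle) (hC' : C'.IsCycle)
    (h1 : Odd l₁) (h2 : Odd l₂)
    (hv : ∃ v, C.HasVert v ∧ C'.HasVert v)
    (hex : ∃ m < l₂, C'.edge m ∉ C.edgeFinset) :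
    ∃ (m : ℕ) (W : G.Walk m), 0 < m ∧ Even m ∧ W.IsClosed ∧
      (∀ i j, i < m → j < m → W.edge i = W.edge j → i = j) ∧
      W.edgeFinset ⊆ C.edgeFinset ∪ C'.edgeFinset := by
  classical
  have hl₁ : 0 < l₁ := hC.2.1
  have hl₂ : 0 < l₂ := hC'.2.1
  have hCcl : C.IsClosed := hC.1
  have hC'cl : C'.IsClosed := hC'.1
  -- Step 1: find k < l₂ with C'.vert k on C and C'.edge k not an edge of C.
  have hstep1 : ∃ k < l₂, C.HasVert (C'.vert k) ∧ C'.edge k ∉ C.edgeFinset := by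
    by_contra hcon
    push_neg at hcon
    have hstep : ∀ p < l₂, C.HasVert (C'.vert p) → C.HasVert (C'.vert ((p + 1) % l₂)) := by
      intro p hp hhv
      have hmem : C'.edge p ∈ C.edgeFinset := hcon p hp hhv
      rw [edge] at hmem
      have := (hasVert_of_edge_mem hCcl hmem).2
      rwa [vert_mod hC'cl hl₂ (p + 1) (by omega)] at this
    obtain ⟨v, hvC, j, hj, hvj⟩ := hv
    have hall : ∀ s, C.HasVert (C'.vert ((j + s) % l₂)) := by
      intro s
      induction s with
      | zero => rw [Nat.add_zero, Nat.mod_eq_of_lt hj, hvj]; exact hvC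
      | succ s ih =>
          have := hstep ((j + s) % l₂) (Nat.mod_lt _ hl₂) ih
          rwa [Nat.mod_add_mod, show j + s + 1 = j + (s + 1) from Nat.add_assoc j s 1] at this
    obtain ⟨m, hm, hme⟩ := hex
    have : C.HasVert (C'.vert m) := by
      have := hall (l₂ - j + m)
      rwa [show j + (l₂ - j + m) = m + l₂ by omega, Nat.add_mod_right,
        Nat.mod_eq_of_lt hm] at this
    exact hme (hcon m hm this)
  obtain ⟨k, hk, hkV, hke⟩ := hstep1
  -- Step 2: rotate C' to start at position k.
  set D := C'.rot hC'cl hl₂ k with hD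
  have hDvert : ∀ i, D.vert i = C'.vert ((i + k) % l₂) := fun i => rfl
  have hDedge : ∀ i, D.edge i = C'.edge ((i + k) % l₂) := rot_edge C' hC'cl hl₂ k
  have hDcl : D.IsClosed := rot_closed C' hC'cl hl₂ k
  have hD0 : C.HasVert (D.vert 0) := by
    rw [hDvert, Nat.zero_add, Nat.mod_eq_of_lt hk]; exact hkV
  have hDe0 : D.edge 0 ∉ C.edgeFinset := by
    rw [hDedge, Nat.zero_add, Nat.mod_eq_of_lt hk]; exact hke
  have hDeinj : ∀ a < l₂, ∀ b < l₂, D.edge a = D.edge b → a = b := by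
    intro a ha b hb hab
    rw [hDedge, hDedge] at hab
    exact mod_shift_inj ha hb
      (cyc_edge_inj hC' _ (Nat.mod_lt _ hl₂) _ (Nat.mod_lt _ hl₂) hab)
  have hDmem : ∀ i, D.edge i ∈ C'.edgeFinset := by
    intro i
    rw [hDedge]
    exact mem_edgeFinset.mpr ⟨(i + k) % l₂, Nat.mod_lt _ hl₂, rfl⟩
  -- Step 3: first return to C.
  have hP : ∃ t, 0 < t ∧ C.HasVert (D.vert t) := ⟨l₂, hl₂, by rw [hDcl]; exact hD0⟩
  set t := Nat.find hP with htdef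
  obtain ⟨ht0, htV⟩ : 0 < t ∧ C.HasVert (D.vert t) := Nat.find_spec hP
  have htle : t ≤ l₂ := Nat.find_le ⟨hl₂, by rw [hDcl]; exact hD0⟩
  have htmin : ∀ s, 0 < s → s < t → ¬ C.HasVert (D.vert s) := by
    intro s hs1 hs2 hs3
    exact Nat.find_min hP hs2 ⟨hs1, hs3⟩
  -- Step 4: edges of the initial segment of D avoid C.
  have hPedges : ∀ s < t, D.edge s ∉ C.edgeFinset := by
    intro s hs hmem
    rcases Nat.eq_zero_or_pos s with rfl | hs0
    · exact hDe0 hmem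
    · rw [edge] at hmem
      exact htmin s hs0 hs (hasVert_of_edge_mem hCcl hmem).1
  -- Step 5: rotate C to start at the point D.vert 0.
  obtain ⟨i₀, hi₀, hxi⟩ := hD0
  set E := C.rot hCcl hl₁ i₀ with hE
  have hEvert : ∀ i, E.vert i = C.vert ((i + i₀) % l₁) := fun i => rfl
  have hEedge : ∀ i, E.edge i = C.edge ((i + i₀) % l₁) := rot_edge C hCcl hl₁ i₀
  have hEcl : E.IsClosed := rot_closed C hCcl hl₁ i₀
  have hE0 : E.vert 0 = D.vert 0 := by
    rw [hEvert, Nat.zero_add, Nat.mod_eq_of_lt hi₀]; exact hxi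
  have hEeinj : ∀ a < l₁, ∀ b < l₁, E.edge a = E.edge b → a = b := by
    intro a ha b hb hab
    rw [hEedge, hEedge] at hab
    exact mod_shift_inj ha hb
      (cyc_edge_inj hC _ (Nat.mod_lt _ hl₁) _ (Nat.mod_lt _ hl₁) hab)
  have hEmem : ∀ i, E.edge i ∈ C.edgeFinset := by
    intro i
    rw [hEedge]
    exact mem_edgeFinset.mpr ⟨(i + i₀) % l₁, Nat.mod_lt _ hl₁, rfl⟩
  have hEvinj : ∀ a < l₁, ∀ b < l₁, E.vert a = E.vert b → a = b := by
    intro a ha b hb hab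
    rw [hEvert, hEvert] at hab
    exact mod_shift_inj ha hb
      (hC.2.2.2 _ (Nat.mod_lt _ hl₁) _ (Nat.mod_lt _ hl₁) hab)
  -- find j with E.vert j = D.vert t
  obtain ⟨j₀, hj₀, hyj⟩ := htV
  have hj' : ∃ j < l₁, E.vert j = D.vert t := by
    refine ⟨(j₀ + l₁ - i₀) % l₁, Nat.mod_lt _ hl₁, ?_⟩
    rw [hEvert, Nat.mod_add_mod, show j₀ + l₁ - i₀ + i₀ = j₀ + l₁ by omega,
      Nat.add_mod_right, Nat.mod_eq_of_lt hj₀]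
    exact hyj
  obtain ⟨j, hjl, hEj⟩ := hj'
  -- The segment P of D from 0 to t.
  set P := D.seg 0 t (by omega) with hPdef
  have hPvert : ∀ i, P.vert i = D.vert i := by intro i; rw [hPdef, seg_vert, Nat.zero_add]
  have hPedge : ∀ i, P.edge i = D.edge i := by intro i; rw [hPdef, seg_edge, Nat.zero_add]
  by_cases hj0 : j = 0
  · -- D.vert t = D.vert 0 : P is closed
    have hPt0 : P.vert t = P.vert 0 := by
      rw [hPvert, hPvert, ← hEj, hj0, hE0]
    rcases Nat.even_or_odd t with hte | hto
    · refine ⟨t, P, ht0, hte, hPt0, ?_, ?_⟩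
      · intro a b ha hb hab
        rw [hPedge, hPedge] at hab
        exact hDeinj a (by omega) b (by omega) hab
      · intro e he
        rw [mem_edgeFinset] at he
        obtain ⟨s, hs, rfl⟩ := he
        rw [Finset.mem_union, hPedge]
        exact Or.inr (hDmem s)
    · -- concatenate E (all of C) with P
      have hcat : E.vert l₁ = P.vert 0 := by rw [hEcl, hE0, hPvert]
      refine ⟨l₁ + t, E.cat P hcat, by omega, ?_, ?_, ?_, ?_⟩
      · obtain ⟨a, ha⟩ := h1; obtain ⟨b, hb⟩ := hto; exact ⟨(l₁ + t) / 2, by omega⟩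
      · show (E.cat P hcat).vert (l₁ + t) = (E.cat P hcat).vert 0
        rw [cat_vert_last, cat_vert_zero, hPt0, hPvert, ← hE0]
      · intro a b ha hb hab
        rcases Nat.lt_or_ge a l₁ with ha1 | ha1 <;> rcases Nat.lt_or_ge b l₁ with hb1 | hb1
        · rw [cat_edge_lt E P hcat ha1, cat_edge_lt E P hcat hb1] at hab
          exact hEeinj a ha1 b hb1 hab
        · rw [cat_edge_lt E P hcat ha1, cat_edge_ge E P hcat hb1, hPedge] at hab
          exact absurd (hab ▸ hEmem a) (hPedges (b - l₁) (by omega))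
        · rw [cat_edge_ge E P hcat ha1, cat_edge_lt E P hcat hb1, hPedge] at hab
          exact absurd (hab ▸ hPedges (a - l₁) (by omega)) (by simp [hEmem b])
        · rw [cat_edge_ge E P hcat ha1, cat_edge_ge E P hcat hb1, hPedge, hPedge] at hab
          have := hDeinj (a - l₁) (by omega) (b - l₁) (by omega) hab
          omega
      · intro e he
        rw [mem_edgeFinset] at he
        obtain ⟨s, hs, rfl⟩ := he
        rw [Finset.mem_union]
        rcases Nat.lt_or_ge s l₁ with hs1 | hs1
        · rw [cat_edge_lt E P hcat hs1]; exact Or.inl (hEmem s)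
        · rw [cat_edge_ge E P hcat hs1, hPedge]; exact Or.inr (hDmem (s - l₁))
  · -- j ≠ 0 : two arcs of C between E.vert 0 and E.vert j
    have hj0' : 0 < j := Nat.pos_of_ne_zero hj0
    rcases Nat.even_or_odd (t + j) with hev | hod
    · -- use P followed by the reverse of the arc E[0..j]
      set Q := (E.seg 0 j (by omega)).rev with hQdef
      have hQvert : ∀ i, Q.vert i = E.vert (j - i) := by
        intro i
        rw [hQdef, rev_vert, seg_vert, Nat.zero_add]
      have hQedge : ∀ i < j, Q.edge i = E.edge (j - 1 - i) := by
        intro i hi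
        rw [hQdef, rev_edge _ hi, seg_edge, Nat.zero_add]
      have hcat : P.vert t = Q.vert 0 := by
        rw [hPvert, hQvert, Nat.sub_zero, hEj]
      refine ⟨t + j, P.cat Q hcat, by omega, hev, ?_, ?_, ?_⟩
      · show (P.cat Q hcat).vert (t + j) = (P.cat Q hcat).vert 0
        rw [cat_vert_last, cat_vert_zero, hQvert, hPvert, Nat.sub_self, hE0]
      · intro a b ha hb hab
        rcases Nat.lt_or_ge a t with ha1 | ha1 <;> rcases Nat.lt_or_ge b t with hb1 | hb1
        · rw [cat_edge_lt P Q hcat ha1, cat_edge_lt P Q hcat hb1, hPedge, hPedge] at hab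
          exact hDeinj a (by omega) b (by omega) hab
        · rw [cat_edge_lt P Q hcat ha1, cat_edge_ge P Q hcat hb1, hPedge,
            hQedge _ (by omega)] at hab
          exact absurd (hab ▸ hEmem (j - 1 - (b - t))) (hPedges a ha1)
        · rw [cat_edge_ge P Q hcat ha1, cat_edge_lt P Q hcat hb1, hPedge,
            hQedge _ (by omega)] at hab
          exact absurd (hab.symm ▸ hEmem (j - 1 - (a - t))) (hPedges b hb1)
        · rw [cat_edge_ge P Q hcat ha1, cat_edge_ge P Q hcat hb1,
            hQedge _ (by omega), hQedge _ (by omega)] at hab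
          have := hEeinj _ (by omega) _ (by omega) hab
          omega
      · intro e he
        rw [mem_edgeFinset] at he
        obtain ⟨s, hs, rfl⟩ := he
        rw [Finset.mem_union]
        rcases Nat.lt_or_ge s t with hs1 | hs1
        · rw [cat_edge_lt P Q hcat hs1, hPedge]; exact Or.inr (hDmem s)
        · rw [cat_edge_ge P Q hcat hs1, hQedge _ (by omega)]
          exact Or.inl (hEmem _)
    · -- use P followed by the arc E[j..l₁]
      set Q := E.seg j (l₁ - j) (by omega) with hQdef
      have hQvert : ∀ i, Q.vert i = E.vert (j + i) := fun i => rfl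
      have hQedge : ∀ i, Q.edge i = E.edge (j + i) := seg_edge E j (l₁ - j) (by omega)
      have hcat : P.vert t = Q.vert 0 := by
        rw [hPvert, hQvert, Nat.add_zero, hEj]
      refine ⟨t + (l₁ - j), P.cat Q hcat, by omega, ?_, ?_, ?_, ?_⟩
      · obtain ⟨a, ha⟩ := h1; obtain ⟨b, hb⟩ := hod
        exact ⟨(t + (l₁ - j)) / 2, by omega⟩
      · show (P.cat Q hcat).vert (t + (l₁ - j)) = (P.cat Q hcat).vert 0
        rw [cat_vert_last, cat_vert_zero, hQvert, hPvert,
          show j + (l₁ - j) = l₁ by omega, hEcl, hE0]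
      · intro a b ha hb hab
        rcases Nat.lt_or_ge a t with ha1 | ha1 <;> rcases Nat.lt_or_ge b t with hb1 | hb1
        · rw [cat_edge_lt P Q hcat ha1, cat_edge_lt P Q hcat hb1, hPedge, hPedge] at hab
          exact hDeinj a (by omega) b (by omega) hab
        · rw [cat_edge_lt P Q hcat ha1, cat_edge_ge P Q hcat hb1, hPedge, hQedge] at hab
          exact absurd (hab ▸ hEmem (j + (b - t))) (hPedges a ha1)
        · rw [cat_edge_ge P Q hcat ha1, cat_edge_lt P Q hcat hb1, hPedge, hQedge] at hab
          exact absurd (hab.symm ▸ hEmem (j + (a - t))) (hPedges b hb1)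
        · rw [cat_edge_ge P Q hcat ha1, cat_edge_ge P Q hcat hb1, hQedge, hQedge] at hab
          have := hEeinj _ (by omega) _ (by omega) hab
          omega
      · intro e he
        rw [mem_edgeFinset] at he
        obtain ⟨s, hs, rfl⟩ := he
        rw [Finset.mem_union]
        rcases Nat.lt_or_ge s t with hs1 | hs1
        · rw [cat_edge_lt P Q hcat hs1, hPedge]; exact Or.inr (hDmem s)
        · rw [cat_edge_ge P Q hcat hs1, hQedge]
          exact Or.inl (hEmem _)

end Walk

end SignedGraph
/-- every even cycle is a reducing closed walk; and the union of
two distinct odd cycles sharing a vertex contains an even cycle (a closed walk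
of positive even length with pairwise distinct edges). -/
theorem statement5 {V : Type} [DecidableEq V] (G : SignedGraph V) (hsgn : G.Proper) :
    (∀ (l : ℕ) (W : G.Walk l), W.IsCycle → Even l → W.ReducingClosedWalk) ∧
    (∀ (l₁ l₂ : ℕ) (C : G.Walk l₁) (C' : G.Walk l₂),
      C.IsCycle → C'.IsCycle → Odd l₁ → Odd l₂ →
      C.edgeFinset ≠ C'.edgeFinset → (∃ v, C.HasVert v ∧ C'.HasVert v) →
      ∃ (m : ℕ) (W : G.Walk m), 0 < m ∧ Even m ∧ W.IsClosed ∧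
        (∀ i j, i < m → j < m → W.edge i = W.edge j → i = j) ∧
        W.edgeFinset ⊆ C.edgeFinset ∪ C'.edgeFinset) := by
  constructor
  · intro l W hW hev
    exact ⟨hW.1, hev, fun i j hij hjl heq =>
      absurd (SignedGraph.Walk.cyc_edge_inj hW i (by omega) j hjl heq) (by omega)⟩
  · intro l₁ l₂ C C' hC hC' h1 h2 hne hv
    by_cases hsub : ∃ m < l₂, C'.edge m ∉ C.edgeFinset
    · exact SignedGraph.Walk.key hC hC' h1 h2 hv hsub
    · push_neg at hsub
      have hsub2 : ∃ m < l₁, C.edge m ∉ C'.edgeFinset := by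
        by_contra hc
        push_neg at hc
        apply hne
        apply Finset.Subset.antisymm
        · intro e he
          rw [SignedGraph.Walk.mem_edgeFinset] at he
          obtain ⟨i, hi, rfl⟩ := he
          exact hc i hi
        · intro e he
          rw [SignedGraph.Walk.mem_edgeFinset] at he
          obtain ⟨i, hi, rfl⟩ := he
          exact hsub i hi
      obtain ⟨m, W, a, b, c, d, e⟩ := SignedGraph.Walk.key hC' hC h2 h1
        (by obtain ⟨v, hv1, hv2⟩ := hv; exact ⟨v, hv2, hv1⟩) hsub2
      exact ⟨m, W, a, b, c, d, by rwa [Finset.union_comm] at e⟩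
end

section
/- Let C and C' be two disjoint odd cycles in the same component of a graph, and let P be a path between them whose interior is disjoint from C and C'. Then the closed walk W formed by traversing C once, C' once, and P twice is a reducing closed walk: W has even length, and every edge occurring more than once in W (necessarily an edge of P) has an odd number of edges between its two occurrences. -/
open Finset

section Helpers

/-- A permutation-type rewriting of a multiset map over a range. -/
lemma chunkMS {α : Type*} (g h : ℕ → α) (σ : ℕ → ℕ) {l : ℕ}
    (hσlt : ∀ n < l, σ n < l) (hσinj : ∀ a < l, ∀ b < l, σ a = σ b → a = b)
    (hg : ∀ n < l, g n = h (σ n)) :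
    ((List.range l).map g : Multiset α) = ((List.range l).map h : Multiset α) := by
  have h0 : ((List.range l).map g : Multiset α) = Multiset.map g (Multiset.range l) := rfl
  have h0' : ((List.range l).map h : Multiset α) = Multiset.map h (Multiset.range l) := rfl
  rw [h0, h0']
  have hperm : Multiset.map σ (Multiset.range l) = Multiset.range l := by
    have nd : (Multiset.map σ (Multiset.range l)).Nodup :=
      (Multiset.nodup_range l).map_on
        (fun a ha b hb hab => hσinj a (Multiset.mem_range.mp ha) b (Multiset.mem_range.mp hb) hab)
    have hsub : Multiset.map σ (Multiset.range l) ⊆ Multiset.range l := by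
      intro x hx
      obtain ⟨n, hn, rfl⟩ := Multiset.mem_map.mp hx
      exact Multiset.mem_range.mpr (hσlt n (Multiset.mem_range.mp hn))
    exact Multiset.eq_of_le_of_card_le ((Multiset.le_iff_subset nd).mpr hsub) (by simp)
  calc Multiset.map g (Multiset.range l)
      = Multiset.map (fun n => h (σ n)) (Multiset.range l) :=
        Multiset.map_congr rfl (fun n hn => hg n (Multiset.mem_range.mp hn))
    _ = Multiset.map h (Multiset.map σ (Multiset.range l)) := by rw [Multiset.map_map]; rfl
    _ = Multiset.map h (Multiset.range l) := by rw [hperm]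

end Helpers

namespace SignedGraph
variable {V : Type} [DecidableEq V] {G : SignedGraph V}

namespace Walk

lemma vert_mod_s6 {l : ℕ} {C : G.Walk l} (hc : C.IsClosed) (m : ℕ) (hm : m < l) :
    C.vert ((m + 1) % l) = C.vert (m + 1) := by
  rcases Nat.lt_or_ge (m + 1) l with h | h
  · rw [Nat.mod_eq_of_lt h]
  · have h1 : m + 1 = l := by omega
    rw [h1, Nat.mod_self]
    exact hc.symm

lemma edge_mod {l : ℕ} {C : G.Walk l} (hc : C.IsClosed) (m : ℕ) (hm : m < l) :
    s(C.vert m, C.vert ((m + 1) % l)) = C.edge m := by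
  rw [vert_mod_s6 hc m hm]; rfl

lemma cycle_edge_inj {l : ℕ} {C : G.Walk l} (hC : C.IsCycle) {m m' : ℕ}
    (hm : m < l) (hm' : m' < l) (h : C.edge m = C.edge m') : m = m' := by
  obtain ⟨hcl, hl, hl2, hinj⟩ := hC
  rw [edge, edge, Sym2.eq_iff] at h
  rcases h with ⟨h1, _⟩ | ⟨h1, h2⟩
  · exact hinj m hm m' hm' h1
  · -- h1 : C.vert m = C.vert (m' + 1), h2 : C.vert (m + 1) = C.vert m'
    have e1 : m = (m' + 1) % l := by
      apply hinj m hm _ (Nat.mod_lt _ hl)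
      rw [vert_mod_s6 hcl m' hm']; exact h1
    have e2 : (m + 1) % l = m' := by
      apply hinj _ (Nat.mod_lt _ hl) m' hm'
      rw [vert_mod_s6 hcl m hm]; exact h2
    rcases Nat.lt_or_ge (m' + 1) l with c1 | c1 <;> rcases Nat.lt_or_ge (m + 1) l with c2 | c2
    · rw [Nat.mod_eq_of_lt c1] at e1; rw [Nat.mod_eq_of_lt c2] at e2; omega
    · rw [Nat.mod_eq_of_lt c1] at e1
      have : m + 1 = l := by omega
      rw [this, Nat.mod_self] at e2; omega
    · have : m' + 1 = l := by omega
      rw [this, Nat.mod_self] at e1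
      rw [Nat.mod_eq_of_lt c2] at e2; omega
    · have h3 : m' + 1 = l := by omega
      have h4 : m + 1 = l := by omega
      omega

lemma path_edge_inj {l : ℕ} {P : G.Walk l} (hP : P.IsPath) {k k' : ℕ}
    (hk : k < l) (hk' : k' < l) (h : P.edge k = P.edge k') : k = k' := by
  rw [edge, edge, Sym2.eq_iff] at h
  rcases h with ⟨h1, _⟩ | ⟨h1, h2⟩
  · exact hP k (by omega) k' (by omega) h1
  · have e1 := hP k (by omega) (k' + 1) (by omega) h1
    have e2 := hP (k + 1) (by omega) k' (by omega) h2
    omega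

lemma hasVert_of_mem_edge {l : ℕ} {C : G.Walk l} (hcl : C.IsClosed) (hl : 0 < l)
    {m : ℕ} (hm : m < l) {x : V} (hx : x ∈ C.edge m) : C.HasVert x := by
  rw [edge, Sym2.mem_iff] at hx
  rcases hx with rfl | rfl
  · exact ⟨m, hm, rfl⟩
  · rcases Nat.lt_or_ge (m + 1) l with h | h
    · exact ⟨m + 1, h, rfl⟩
    · have : m + 1 = l := by omega
      exact ⟨0, hl, by rw [← hcl, this]⟩

end Walk
end SignedGraph

/-- traversing two disjoint odd cycles once each and a connecting
path (with interior disjoint from both cycles) twice yields a reducing closed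
walk. -/
theorem statement6 {V : Type} [DecidableEq V] (G : SignedGraph V) (hsgn : G.Proper)
    {l₁ l₂ p : ℕ} (C : G.Walk l₁) (C' : G.Walk l₂) (P : G.Walk p)
    (hC : C.IsCycle) (hC' : C'.IsCycle) (h₁ : Odd l₁) (h₂ : Odd l₂)
    (hdisj : SignedGraph.DisjointCycles C C')
    (hP : P.IsPath) (hP0 : ∃ i < l₁, P.vert 0 = C.vert i)
    (hPp : ∃ j < l₂, P.vert p = C'.vert j)
    (hint : ∀ i, 0 < i → i < p → ¬C.HasVert (P.vert i) ∧ ¬C'.HasVert (P.vert i)) :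
    ∃ W : G.Walk (l₁ + l₂ + 2 * p), W.ReducingClosedWalk ∧
      W.edgeMS = C.edgeMS + C'.edgeMS + 2 • P.edgeMS := by
  classical
  obtain ⟨i₀, hi₀, hPi₀⟩ := hP0
  obtain ⟨j₀, hj₀, hPj₀⟩ := hPp
  have hl₁ : 0 < l₁ := hC.2.1
  have hl₂ : 0 < l₂ := hC'.2.1
  have hp : 0 < p := by
    rcases Nat.eq_zero_or_pos p with h | h
    · exfalso
      apply hdisj i₀ hi₀ j₀ hj₀
      rw [← hPi₀, ← hPj₀]
      exact congrArg P.vert h.symm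
    · exact h
  -- the vertex function of the big walk
  set f : ℕ → V := fun n =>
    if n < l₁ then C.vert ((i₀ + n) % l₁)
    else if n < l₁ + p then P.vert (n - l₁)
    else if n < l₁ + p + l₂ then C'.vert ((j₀ + (n - (l₁ + p))) % l₂)
    else P.vert (p - (n - (l₁ + p + l₂))) with hfdef
  have fA : ∀ n ≤ l₁, f n = C.vert ((i₀ + n) % l₁) := by
    intro n hn
    rcases Nat.lt_or_ge n l₁ with h | h
    · simp only [hfdef]; rw [if_pos h]
    · have hn' : n = l₁ := by omega
      simp only [hfdef]
      rw [if_neg (by omega), if_pos (by omega), hn', Nat.sub_self, hPi₀,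
        Nat.add_mod_right, Nat.mod_eq_of_lt hi₀]
  have fB : ∀ n ≤ p, f (l₁ + n) = P.vert n := by
    intro n hn
    rcases Nat.lt_or_ge n p with h | h
    · simp only [hfdef]
      rw [if_neg (by omega), if_pos (by omega), Nat.add_sub_cancel_left]
    · have hn' : n = p := by omega
      simp only [hfdef]
      rw [if_neg (by omega), if_neg (by omega), if_pos (by omega), hn']
      rw [show l₁ + p - (l₁ + p) = 0 from by omega, Nat.add_zero,
        Nat.mod_eq_of_lt hj₀, hPj₀]
  have fC : ∀ n ≤ l₂, f (l₁ + p + n) = C'.vert ((j₀ + n) % l₂) := by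
    intro n hn
    rcases Nat.lt_or_ge n l₂ with h | h
    · simp only [hfdef]
      rw [if_neg (by omega), if_neg (by omega), if_pos (by omega)]
      congr 2
      omega
    · have hn' : n = l₂ := by omega
      simp only [hfdef]
      rw [if_neg (by omega), if_neg (by omega), if_neg (by omega), hn',
        show p - (l₁ + p + l₂ - (l₁ + p + l₂)) = p from by omega, hPj₀,
        Nat.add_mod_right, Nat.mod_eq_of_lt hj₀]
  have fD : ∀ n ≤ p, f (l₁ + p + l₂ + n) = P.vert (p - n) := by
    intro n hn
    simp only [hfdef]
    rw [if_neg (by omega), if_neg (by omega), if_neg (by omega)]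
    congr 1
    omega
  -- edge formulas
  have eA : ∀ n < l₁, s(f n, f (n + 1)) = C.edge ((i₀ + n) % l₁) := by
    intro n hn
    rw [fA n (by omega), fA (n + 1) (by omega),
      show i₀ + (n + 1) = i₀ + n + 1 from by omega, ← Nat.mod_add_mod (i₀ + n) l₁ 1]
    exact SignedGraph.Walk.edge_mod hC.1 _ (Nat.mod_lt _ hl₁)
  have eB : ∀ n < p, s(f (l₁ + n), f (l₁ + n + 1)) = P.edge n := by
    intro n hn
    rw [show l₁ + n + 1 = l₁ + (n + 1) from by omega, fB n (by omega), fB (n + 1) (by omega)]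
    rfl
  have eC : ∀ n < l₂, s(f (l₁ + p + n), f (l₁ + p + n + 1)) = C'.edge ((j₀ + n) % l₂) := by
    intro n hn
    rw [show l₁ + p + n + 1 = l₁ + p + (n + 1) from by omega, fC n (by omega),
      fC (n + 1) (by omega), show j₀ + (n + 1) = j₀ + n + 1 from by omega, ← Nat.mod_add_mod (j₀ + n) l₂ 1]
    exact SignedGraph.Walk.edge_mod hC'.1 _ (Nat.mod_lt _ hl₂)
  have eD : ∀ n < p, s(f (l₁ + p + l₂ + n), f (l₁ + p + l₂ + n + 1)) = P.edge (p - 1 - n) := by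
    intro n hn
    rw [show l₁ + p + l₂ + n + 1 = l₁ + p + l₂ + (n + 1) from by omega, fD n (by omega),
      fD (n + 1) (by omega), show p - n = (p - 1 - n) + 1 from by omega,
      show p - (n + 1) = p - 1 - n from by omega, SignedGraph.Walk.edge]
    exact Sym2.eq_swap
  -- membership
  have hmem : ∀ n < l₁ + l₂ + 2 * p, s(f n, f (n + 1)) ∈ G.edges := by
    intro n hn
    rcases Nat.lt_or_ge n l₁ with h | h
    · rw [eA n h]; exact C.mem _ (Nat.mod_lt _ hl₁)
    rcases Nat.lt_or_ge n (l₁ + p) with h2 | h2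
    · obtain ⟨k, rfl⟩ : ∃ k, n = l₁ + k := ⟨n - l₁, by omega⟩
      rw [eB k (by omega)]; exact P.mem _ (by omega)
    rcases Nat.lt_or_ge n (l₁ + p + l₂) with h3 | h3
    · obtain ⟨k, rfl⟩ : ∃ k, n = l₁ + p + k := ⟨n - (l₁ + p), by omega⟩
      rw [eC k (by omega)]; exact C'.mem _ (Nat.mod_lt _ hl₂)
    · obtain ⟨k, rfl⟩ : ∃ k, n = l₁ + p + l₂ + k := ⟨n - (l₁ + p + l₂), by omega⟩
      rw [eD k (by omega)]; exact P.mem _ (by omega)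
  refine ⟨⟨f, hmem⟩, ⟨?_, ?_, ?_⟩, ?_⟩
  · -- closed
    show f (l₁ + l₂ + 2 * p) = f 0
    rw [show l₁ + l₂ + 2 * p = l₁ + p + l₂ + p from by omega, fD p le_rfl, Nat.sub_self,
      fA 0 (by omega), Nat.add_zero, Nat.mod_eq_of_lt hi₀, hPi₀]
  · -- even
    obtain ⟨a, ha⟩ := h₁
    obtain ⟨b, hb⟩ := h₂
    exact ⟨a + b + 1 + p, by omega⟩
  · -- reducing condition
    intro i j hij hjl heq
    -- helper facts
    have hPC : ∀ k, 0 < k → k ≤ p → ¬ C.HasVert (P.vert k) := by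
      intro k hk hkp hHas
      rcases Nat.lt_or_ge k p with h | h
      · exact (hint k hk h).1 hHas
      · obtain ⟨m, hm, hmv⟩ := hHas
        have hk' : k = p := by omega
        apply hdisj m hm j₀ hj₀
        rw [hmv, hk', hPj₀]
    have hPC' : ∀ k, k < p → ¬ C'.HasVert (P.vert k) := by
      intro k hk hHas
      rcases Nat.eq_zero_or_pos k with h | h
      · obtain ⟨m, hm, hmv⟩ := hHas
        apply hdisj i₀ hi₀ m hm
        rw [hmv, h, ← hPi₀]
      · exact (hint k h hk).2 hHas
    have hAB : ∀ m < l₁, ∀ k < p, C.edge m ≠ P.edge k := by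
      intro m hm k hk h
      apply hPC (k + 1) (by omega) (by omega)
      apply SignedGraph.Walk.hasVert_of_mem_edge hC.1 hl₁ hm
      rw [h, SignedGraph.Walk.edge]
      exact Sym2.mem_mk_right _ _
    have hCB : ∀ m < l₂, ∀ k < p, C'.edge m ≠ P.edge k := by
      intro m hm k hk h
      apply hPC' k hk
      apply SignedGraph.Walk.hasVert_of_mem_edge hC'.1 hl₂ hm
      rw [h, SignedGraph.Walk.edge]
      exact Sym2.mem_mk_left _ _
    have hAC : ∀ m < l₁, ∀ m' < l₂, C.edge m ≠ C'.edge m' := by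
      intro m hm m' hm' h
      have h1 : C.HasVert (C'.vert m') := by
        apply SignedGraph.Walk.hasVert_of_mem_edge hC.1 hl₁ hm
        rw [h, SignedGraph.Walk.edge]
        exact Sym2.mem_mk_left _ _
      obtain ⟨a, ha, hav⟩ := h1
      exact hdisj a ha m' hm' hav
    have hedge : ∀ n, (⟨f, hmem⟩ : G.Walk (l₁ + l₂ + 2 * p)).edge n = s(f n, f (n + 1)) :=
      fun n => rfl
    rw [hedge, hedge] at heq
    rcases Nat.lt_or_ge i l₁ with hi1 | hi1
    · rw [eA i hi1] at heq
      rcases Nat.lt_or_ge j l₁ with hj1 | hj1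
      · rw [eA j hj1] at heq
        have := SignedGraph.Walk.cycle_edge_inj hC (Nat.mod_lt _ hl₁) (Nat.mod_lt _ hl₁) heq
        have h2 : i ≡ j [MOD l₁] := Nat.ModEq.add_left_cancel' i₀ this
        rw [Nat.ModEq, Nat.mod_eq_of_lt hi1, Nat.mod_eq_of_lt hj1] at h2
        omega
      rcases Nat.lt_or_ge j (l₁ + p) with hj2 | hj2
      · obtain ⟨k, rfl⟩ : ∃ k, j = l₁ + k := ⟨j - l₁, by omega⟩
        rw [eB k (by omega)] at heq
        exact absurd heq (hAB _ (Nat.mod_lt _ hl₁) k (by omega))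
      rcases Nat.lt_or_ge j (l₁ + p + l₂) with hj3 | hj3
      · obtain ⟨k, rfl⟩ : ∃ k, j = l₁ + p + k := ⟨j - (l₁ + p), by omega⟩
        rw [eC k (by omega)] at heq
        exact absurd heq (hAC _ (Nat.mod_lt _ hl₁) _ (Nat.mod_lt _ hl₂))
      · obtain ⟨k, rfl⟩ : ∃ k, j = l₁ + p + l₂ + k := ⟨j - (l₁ + p + l₂), by omega⟩
        rw [eD k (by omega)] at heq
        exact absurd heq (hAB _ (Nat.mod_lt _ hl₁) _ (by omega))
    rcases Nat.lt_or_ge i (l₁ + p) with hi2 | hi2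
    · obtain ⟨k, rfl⟩ : ∃ k, i = l₁ + k := ⟨i - l₁, by omega⟩
      rw [eB k (by omega)] at heq
      rcases Nat.lt_or_ge j (l₁ + p) with hj2 | hj2
      · obtain ⟨k', rfl⟩ : ∃ k', j = l₁ + k' := ⟨j - l₁, by omega⟩
        rw [eB k' (by omega)] at heq
        have := SignedGraph.Walk.path_edge_inj hP (by omega) (by omega : k' < p) heq
        omega
      rcases Nat.lt_or_ge j (l₁ + p + l₂) with hj3 | hj3
      · obtain ⟨m, rfl⟩ : ∃ m, j = l₁ + p + m := ⟨j - (l₁ + p), by omega⟩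
        rw [eC m (by omega)] at heq
        exact absurd heq.symm (hCB _ (Nat.mod_lt _ hl₂) k (by omega))
      · obtain ⟨m, rfl⟩ : ∃ m, j = l₁ + p + l₂ + m := ⟨j - (l₁ + p + l₂), by omega⟩
        rw [eD m (by omega)] at heq
        have hkm := SignedGraph.Walk.path_edge_inj hP (by omega : k < p) (by omega : p - 1 - m < p) heq
        obtain ⟨b, hb⟩ := h₂
        exact ⟨b + (m - (l₁ + p + l₂ + m - (l₁ + p + l₂ + m))), by omega⟩
    rcases Nat.lt_or_ge i (l₁ + p + l₂) with hi3 | hi3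
    · obtain ⟨m, rfl⟩ : ∃ m, i = l₁ + p + m := ⟨i - (l₁ + p), by omega⟩
      rw [eC m (by omega)] at heq
      rcases Nat.lt_or_ge j (l₁ + p + l₂) with hj3 | hj3
      · obtain ⟨m', rfl⟩ : ∃ m', j = l₁ + p + m' := ⟨j - (l₁ + p), by omega⟩
        rw [eC m' (by omega)] at heq
        have := SignedGraph.Walk.cycle_edge_inj hC' (Nat.mod_lt _ hl₂) (Nat.mod_lt _ hl₂) heq
        have h2 : m ≡ m' [MOD l₂] := Nat.ModEq.add_left_cancel' j₀ this
        rw [Nat.ModEq, Nat.mod_eq_of_lt (by omega : m < l₂),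
          Nat.mod_eq_of_lt (by omega : m' < l₂)] at h2
        omega
      · obtain ⟨k, rfl⟩ : ∃ k, j = l₁ + p + l₂ + k := ⟨j - (l₁ + p + l₂), by omega⟩
        rw [eD k (by omega)] at heq
        exact absurd heq (hCB _ (Nat.mod_lt _ hl₂) _ (by omega))
    · obtain ⟨k, rfl⟩ : ∃ k, i = l₁ + p + l₂ + k := ⟨i - (l₁ + p + l₂), by omega⟩
      rw [eD k (by omega)] at heq
      obtain ⟨k', rfl⟩ : ∃ k', j = l₁ + p + l₂ + k' := ⟨j - (l₁ + p + l₂), by omega⟩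
      rw [eD k' (by omega)] at heq
      have := SignedGraph.Walk.path_edge_inj hP (by omega : p - 1 - k < p)
        (by omega : p - 1 - k' < p) heq
      omega
  · -- edge multiset
    have hedge : ∀ n, (⟨f, hmem⟩ : G.Walk (l₁ + l₂ + 2 * p)).edge n = s(f n, f (n + 1)) :=
      fun n => rfl
    show ((List.range (l₁ + l₂ + 2 * p)).map
        (⟨f, hmem⟩ : G.Walk (l₁ + l₂ + 2 * p)).edge : Multiset (Sym2 V))
      = C.edgeMS + C'.edgeMS + 2 • P.edgeMS
    have hr : List.range (l₁ + l₂ + 2 * p) = List.range (l₁ + (p + (l₂ + p))) := by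
      congr 1
      omega
    rw [hr, List.range_add, List.range_add, List.range_add]
    simp only [List.map_append, List.map_map]
    have coe4 : ∀ (a b c d : List (Sym2 V)),
        ((a ++ (b ++ (c ++ d)) : List (Sym2 V)) : Multiset (Sym2 V))
          = (a : Multiset (Sym2 V)) + b + c + d := by
      intro a b c d
      simp [add_assoc]
    rw [coe4]
    have ch1 : ((List.range l₁).map (⟨f, hmem⟩ : G.Walk (l₁ + l₂ + 2 * p)).edge :
        Multiset (Sym2 V)) = C.edgeMS := by
      apply chunkMS _ _ (fun n => (i₀ + n) % l₁)
      · intro n hn; exact Nat.mod_lt _ hl₁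
      · intro a ha b hb hab
        have h2 : a ≡ b [MOD l₁] := Nat.ModEq.add_left_cancel' i₀ hab
        rw [Nat.ModEq, Nat.mod_eq_of_lt ha, Nat.mod_eq_of_lt hb] at h2
        exact h2
      · intro n hn
        rw [hedge]
        exact eA n hn
    have ch2 : ((List.range p).map
        ((⟨f, hmem⟩ : G.Walk (l₁ + l₂ + 2 * p)).edge ∘ fun x => l₁ + x) :
        Multiset (Sym2 V)) = P.edgeMS := by
      apply chunkMS _ _ (fun n => n)
      · intro n hn; exact hn
      · intro a _ b _ hab; exact hab
      · intro n hn
        show (⟨f, hmem⟩ : G.Walk (l₁ + l₂ + 2 * p)).edge (l₁ + n) = P.edge n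
        rw [hedge]
        exact eB n hn
    have ch3 : ((List.range l₂).map
        ((⟨f, hmem⟩ : G.Walk (l₁ + l₂ + 2 * p)).edge ∘ (fun x => l₁ + x) ∘ fun x => p + x) :
        Multiset (Sym2 V)) = C'.edgeMS := by
      apply chunkMS _ _ (fun n => (j₀ + n) % l₂)
      · intro n hn; exact Nat.mod_lt _ hl₂
      · intro a ha b hb hab
        have h2 : a ≡ b [MOD l₂] := Nat.ModEq.add_left_cancel' j₀ hab
        rw [Nat.ModEq, Nat.mod_eq_of_lt ha, Nat.mod_eq_of_lt hb] at h2
        exact h2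
      · intro n hn
        show (⟨f, hmem⟩ : G.Walk (l₁ + l₂ + 2 * p)).edge (l₁ + (p + n)) = C'.edge ((j₀ + n) % l₂)
        rw [hedge, show l₁ + (p + n) = l₁ + p + n from by omega]
        exact eC n hn
    have ch4 : ((List.range p).map
        ((⟨f, hmem⟩ : G.Walk (l₁ + l₂ + 2 * p)).edge ∘ (fun x => l₁ + x) ∘ (fun x => p + x) ∘ fun x => l₂ + x) :
        Multiset (Sym2 V)) = P.edgeMS := by
      apply chunkMS _ _ (fun n => p - 1 - n)
      · intro n hn; omega
      · intro a ha b hb hab; omega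
      · intro n hn
        show (⟨f, hmem⟩ : G.Walk (l₁ + l₂ + 2 * p)).edge (l₁ + (p + (l₂ + n)))
          = P.edge (p - 1 - n)
        rw [hedge, show l₁ + (p + (l₂ + n)) = l₁ + p + l₂ + n from by omega]
        exact eD n hn
    rw [ch1, ch2, ch3, ch4, two_nsmul]
    abel
end

section
/- Let G be a signed graph with positive real edge weights a_e such that sum_e a_e·rho(e) = alpha. Then there exists a subgraph H of G, each of whose components is a tree or a unicyclic graph whose unique cycle is odd, together with positive edge weights b_e on H, such that sum_{e in H} b_e·rho(e) = alpha. -/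
open Finset

/-- The subgraph of `G` on the edge set `H` (with the same signs). -/
def SignedGraph.restrict {V : Type} [DecidableEq V] (G : SignedGraph V)
    (H : Finset (Sym2 V)) : SignedGraph V :=
  ⟨H, G.sgn⟩

/-- Every component of the subgraph on `H` is a tree or a unicyclic graph whose
unique cycle is odd: equivalently, every cycle in `H` is odd, and any two
cycles of `H` lying in the same component have the same edge set. -/
def TreeOrUnicyclicOdd {V : Type} [DecidableEq V] (G : SignedGraph V)
    (H : Finset (Sym2 V)) : Prop :=
  (∀ (l : ℕ) (C : (G.restrict H).Walk l), C.IsCycle → Odd l) ∧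
  (∀ (l₁ l₂ : ℕ) (C : (G.restrict H).Walk l₁) (C' : (G.restrict H).Walk l₂),
    C.IsCycle → C'.IsCycle → (G.restrict H).SameComponent (C.vert 0) (C'.vert 0) →
    C.edgeFinset = C'.edgeFinset)

section Aux

open SignedGraph Finset

variable {V : Type} [DecidableEq V]

lemma endSum_apply (a b v : V) :
    SignedGraph.endSum s(a, b) v = (if v = a then 1 else 0) + (if v = b then 1 else 0) := by
  simp [SignedGraph.endSum, Pi.single_apply]

lemma rho_apply (G : SignedGraph V) (e : Sym2 V) (v : V) :
    G.rho e v = G.sgn e * SignedGraph.endSum e v := by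
  simp [SignedGraph.rho]

lemma telescope (G : SignedGraph V) (f : ℕ → V) (v : V) (m : ℕ)
    (hs : ∀ i < m, G.sgn s(f i, f (i+1)) * G.sgn s(f i, f (i+1)) = 1) :
    ∑ i ∈ Finset.range m, (-1:ℤ)^i * G.sgn s(f i, f (i+1)) * G.rho s(f i, f (i+1)) v
      = (if v = f 0 then 1 else 0) - (-1)^m * (if v = f m then 1 else 0) := by
  induction m with
  | zero => simp
  | succ n ih =>
    rw [Finset.sum_range_succ, ih (fun i hi => hs i (Nat.lt_succ_of_lt hi))]
    have h1 := hs n (Nat.lt_succ_self n)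
    rw [rho_apply, endSum_apply]
    linear_combination ((-1:ℤ)^n * ((if v = f n then (1:ℤ) else 0)
      + (if v = f (n+1) then (1:ℤ) else 0))) * h1

lemma exchange (H : Finset (Sym2 V)) (g : ℕ → Sym2 V) (w : ℕ → ℤ) (r : Sym2 V → ℤ) (m : ℕ)
    (hg : ∀ i < m, g i ∈ H) :
    ∑ e ∈ H, (∑ i ∈ Finset.range m, if g i = e then w i else 0) * r e
      = ∑ i ∈ Finset.range m, w i * r (g i) := by
  calc ∑ e ∈ H, (∑ i ∈ Finset.range m, if g i = e then w i else 0) * r e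
      = ∑ e ∈ H, ∑ i ∈ Finset.range m, (if g i = e then w i * r e else 0) := by
        refine Finset.sum_congr rfl fun e _ => ?_
        rw [Finset.sum_mul]
        exact Finset.sum_congr rfl fun i _ => by split <;> simp
    _ = ∑ i ∈ Finset.range m, ∑ e ∈ H, (if g i = e then w i * r e else 0) := Finset.sum_comm
    _ = ∑ i ∈ Finset.range m, w i * r (g i) := by
        refine Finset.sum_congr rfl fun i hi => ?_
        rw [Finset.sum_ite_eq H (g i) (fun e => w i * r e)]
        simp [hg i (Finset.mem_range.mp hi)]

end Aux
section Aux2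
open SignedGraph Finset
variable {V : Type} [DecidableEq V]

/-- alternating-sign weight of the `i`-th edge of a walk -/
def wcoef (G : SignedGraph V) {l : ℕ} (W : G.Walk l) (i : ℕ) : ℤ :=
  (-1)^i * G.sgn (W.edge i)

/-- edge-coefficient function collecting the alternating weights -/
def ccoef (G : SignedGraph V) {l : ℕ} (W : G.Walk l) (e : Sym2 V) : ℤ :=
  ∑ i ∈ Finset.range l, if W.edge i = e then wcoef G W i else 0

lemma walk_rel (G : SignedGraph V) {l : ℕ} (W : G.Walk l) (H : Finset (Sym2 V))
    (hs : ∀ i < l, G.sgn (W.edge i) * G.sgn (W.edge i) = 1)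
    (hmem : ∀ i < l, W.edge i ∈ H) (v : V) :
    ∑ e ∈ H, ccoef G W e * G.rho e v
      = (if v = W.vert 0 then 1 else 0) - (-1)^l * (if v = W.vert l then 1 else 0) := by
  rw [show (∑ e ∈ H, ccoef G W e * G.rho e v)
      = ∑ i ∈ Finset.range l, wcoef G W i * G.rho (W.edge i) v from
      exchange H W.edge (wcoef G W) (fun e => G.rho e v) l hmem]
  have := telescope G W.vert v l hs
  simpa [wcoef, SignedGraph.Walk.edge, mul_assoc] using this

lemma cycle_edge_inj {G : SignedGraph V} {l : ℕ} {C : G.Walk l} (hC : C.IsCycle) :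
    ∀ i < l, ∀ j < l, C.edge i = C.edge j → i = j := by
  obtain ⟨hcl, hl, hl2, hd⟩ := hC
  have key : ∀ i j, i ≤ j → j < l → C.edge i = C.edge j → i = j := by
    intro i j hij hjl he
    rw [SignedGraph.Walk.edge, SignedGraph.Walk.edge, Sym2.eq_iff] at he
    rcases he with ⟨h1, _⟩ | ⟨h1, h2⟩
    · exact hd i (lt_of_le_of_lt hij hjl) j hjl h1
    · by_cases hij' : i = j
      · exact hij'
      · have hilt : i < j := lt_of_le_of_ne hij hij'
        have hi1 : i + 1 < l := by omega
        have hj1 : i + 1 = j := hd (i+1) hi1 j hjl h2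
        by_cases h2l : j + 1 < l
        · have : i = j + 1 := hd i (lt_of_le_of_lt hij hjl) (j+1) h2l h1
          omega
        · have hjl' : j + 1 = l := by omega
          rw [hjl', hcl] at h1
          have : i = 0 := hd i (lt_of_le_of_lt hij hjl) 0 hl h1
          omega
  intro i hi j hj he
  rcases le_total i j with h | h
  · exact key i j h hj he
  · exact (key j i h hi he.symm).symm

lemma ccoef_of_notMem {G : SignedGraph V} {l : ℕ} {C : G.Walk l} {e : Sym2 V}
    (he : e ∉ C.edgeFinset) : ccoef G C e = 0 := by
  apply Finset.sum_eq_zero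
  intro i hi
  rw [if_neg]
  intro h
  exact he (Finset.mem_image.mpr ⟨i, hi, h⟩)

lemma ccoef_odd {G : SignedGraph V} {l : ℕ} {C : G.Walk l} (hC : C.IsCycle)
    (hs : ∀ i < l, G.sgn (C.edge i) = 1 ∨ G.sgn (C.edge i) = -1) {e : Sym2 V}
    (he : e ∈ C.edgeFinset) : Odd (ccoef G C e) := by
  obtain ⟨j, hj, hje⟩ := Finset.mem_image.mp he
  rw [Finset.mem_range] at hj
  have : ccoef G C e = wcoef G C j := by
    rw [ccoef, Finset.sum_eq_single j]
    · rw [if_pos hje]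
    · intro i hi hne
      rw [if_neg]
      intro h
      exact hne (cycle_edge_inj hC i (Finset.mem_range.mp hi) j hj (h.trans hje.symm))
    · intro h; exact absurd (Finset.mem_range.mpr hj) h
  rw [this, wcoef]
  rcases Nat.even_or_odd j with hj' | hj'
  · rw [hj'.neg_one_pow]
    rcases hs j hj with h | h <;> rw [h] <;> decide
  · rw [hj'.neg_one_pow]
    rcases hs j hj with h | h <;> rw [h] <;> decide

end Aux2
section Aux3
open SignedGraph Finset
variable {V : Type} [DecidableEq V]

lemma cast_rel (G : SignedGraph V) (H : Finset (Sym2 V)) (z : Sym2 V → ℤ)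
    (hz : ∀ v, ∑ e ∈ H, z e * G.rho e v = 0) :
    ∑ e ∈ H, ((z e : ℝ)) • (fun v => ((G.rho e v : ℤ) : ℝ)) = 0 := by
  funext v
  simp only [Finset.sum_apply, Pi.smul_apply, Pi.zero_apply, smul_eq_mul]
  have : ((∑ e ∈ H, z e * G.rho e v : ℤ) : ℝ) = 0 := by rw [hz v]; simp
  push_cast at this
  exact this

lemma exists_min_rep (G : SignedGraph V)
    (a : Sym2 V → ℝ) (ha : ∀ e ∈ G.edges, 0 < a e) (α : V → ℝ)
    (hα : α = ∑ e ∈ G.edges, a e • fun v => ((G.rho e v : ℤ) : ℝ)) :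
    ∃ H ⊆ G.edges,
      (∃ b : Sym2 V → ℝ, (∀ e ∈ H, 0 < b e) ∧
        α = ∑ e ∈ H, b e • fun v => ((G.rho e v : ℤ) : ℝ)) ∧
      (∀ c : Sym2 V → ℝ, (∑ e ∈ H, c e • (fun v => ((G.rho e v : ℤ) : ℝ)) = 0) →
        ∀ e ∈ H, c e = 0) := by
  classical
  set rr : Sym2 V → (V → ℝ) := fun e => fun v => ((G.rho e v : ℤ) : ℝ) with hrr
  let Q : ℕ → Prop := fun n => ∃ H : Finset (Sym2 V), H ⊆ G.edges ∧ H.card = n ∧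
    ∃ b : Sym2 V → ℝ, (∀ e ∈ H, 0 < b e) ∧ α = ∑ e ∈ H, b e • rr e
  have hQ : ∃ n, Q n := ⟨G.edges.card, G.edges, subset_rfl, rfl, a, ha, hα⟩
  obtain ⟨H, hHsub, hcard, b, hb, hab⟩ := Nat.find_spec hQ
  refine ⟨H, hHsub, ⟨b, hb, hab⟩, ?_⟩
  intro c hc
  by_contra hne
  push_neg at hne
  obtain ⟨e₀, he₀H, he₀⟩ := hne
  obtain ⟨c, hc, he₀⟩ : ∃ c' : Sym2 V → ℝ, (∑ e ∈ H, c' e • rr e = 0) ∧ 0 < c' e₀ := by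
    rcases he₀.lt_or_gt with h | h
    · refine ⟨fun e => -c e, ?_, show 0 < -c e₀ by linarith⟩
      rw [show ∑ e ∈ H, (-c e) • rr e = -∑ e ∈ H, c e • rr e by
        simp [neg_smul, Finset.sum_neg_distrib], hc, neg_zero]
    · exact ⟨c, hc, h⟩
  set T := H.filter (fun e => 0 < c e) with hT
  have hTne : T.Nonempty := ⟨e₀, Finset.mem_filter.mpr ⟨he₀H, he₀⟩⟩
  obtain ⟨e₁, he₁T, hmin⟩ := T.exists_min_image (fun e => b e / c e) hTne
  have he₁H : e₁ ∈ H := (Finset.mem_filter.mp he₁T).1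
  have hc₁ : 0 < c e₁ := (Finset.mem_filter.mp he₁T).2
  set t := b e₁ / c e₁ with ht
  have htpos : 0 < t := div_pos (hb e₁ he₁H) hc₁
  set b' : Sym2 V → ℝ := fun e => b e - t * c e with hb'
  have hb'nonneg : ∀ e ∈ H, 0 ≤ b' e := by
    intro e heH
    by_cases hce : 0 < c e
    · have h1 : t ≤ b e / c e := hmin e (Finset.mem_filter.mpr ⟨heH, hce⟩)
      have h2 : t * c e ≤ (b e / c e) * c e := by nlinarith
      rw [div_mul_cancel₀ _ (ne_of_gt hce)] at h2
      simp only [hb']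
      linarith
    · push_neg at hce
      have := hb e heH
      simp only [hb']
      nlinarith
  have hb'e₁ : b' e₁ = 0 := by
    simp only [hb', ht]
    rw [div_mul_cancel₀ _ (ne_of_gt hc₁)]
    ring
  set H' := H.filter (fun e => b' e ≠ 0) with hH'
  have hsub' : H' ⊆ H := Finset.filter_subset _ _
  have hlt : H'.card < H.card := by
    apply Finset.card_lt_card
    rw [Finset.ssubset_iff_of_subset hsub']
    exact ⟨e₁, he₁H, fun hmem => (Finset.mem_filter.mp hmem).2 hb'e₁⟩
  have hQ' : Q H'.card := by
    refine ⟨H', hsub'.trans hHsub, rfl, b', ?_, ?_⟩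
    · intro e he
      exact lt_of_le_of_ne (hb'nonneg e (hsub' he)) (Ne.symm (Finset.mem_filter.mp he).2)
    · have h1 : ∑ e ∈ H', b' e • rr e = ∑ e ∈ H, b' e • rr e := by
        apply Finset.sum_subset hsub'
        intro e heH heH'
        have : b' e = 0 := by
          by_contra h; exact heH' (Finset.mem_filter.mpr ⟨heH, h⟩)
        rw [this, zero_smul]
      rw [h1]
      have h2 : ∑ e ∈ H, b' e • rr e
          = ∑ e ∈ H, b e • rr e - t • ∑ e ∈ H, c e • rr e := by
        rw [Finset.smul_sum]
        rw [← Finset.sum_sub_distrib]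
        refine Finset.sum_congr rfl fun e _ => ?_
        simp only [hb', sub_smul, mul_smul]
      rw [h2, hc, smul_zero, sub_zero, hab]
  have := Nat.find_min' hQ hQ'
  omega
end Aux3
/-- a positively weighted edge sum can be rewritten as a
positively weighted edge sum over a subgraph whose components are trees or
unicyclic graphs with odd cycle. -/
theorem statement7 {V : Type} [DecidableEq V] (G : SignedGraph V) (hsgn : G.Proper)
    (a : Sym2 V → ℝ) (ha : ∀ e ∈ G.edges, 0 < a e) (α : V → ℝ)
    (hα : α = ∑ e ∈ G.edges, a e • fun v => ((G.rho e v : ℤ) : ℝ)) :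
    ∃ H ⊆ G.edges, TreeOrUnicyclicOdd G H ∧
      ∃ b : Sym2 V → ℝ, (∀ e ∈ H, 0 < b e) ∧
        α = ∑ e ∈ H, b e • fun v => ((G.rho e v : ℤ) : ℝ) := by
  classical
  obtain ⟨H, hHsub, hrep, hindep⟩ := exists_min_rep G a ha α hα
  refine ⟨H, hHsub, ?_, hrep⟩
  set GH := G.restrict H with hGH
  have hrho : GH.rho = G.rho := rfl
  have hsgn' : GH.sgn = G.sgn := rfl
  have hsgnH : ∀ e ∈ H, G.sgn e = 1 ∨ G.sgn e = -1 := fun e he => hsgn e (hHsub he)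
  have hedge_mem : ∀ {l : ℕ} (W : GH.Walk l), ∀ i < l, W.edge i ∈ H :=
    fun W i hi => W.mem i hi
  have hs2 : ∀ {l : ℕ} (W : GH.Walk l), ∀ i < l, GH.sgn (W.edge i) * GH.sgn (W.edge i) = 1 := by
    intro l W i hi
    rcases hsgnH _ (hedge_mem W i hi) with h | h <;>
      · show G.sgn _ * G.sgn _ = 1
        rw [h]; decide
  have hsgns : ∀ {l : ℕ} (W : GH.Walk l), ∀ i < l,
      GH.sgn (W.edge i) = 1 ∨ GH.sgn (W.edge i) = -1 :=
    fun W i hi => hsgnH _ (hedge_mem W i hi)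
  have edge_sub : ∀ {l : ℕ} (W : GH.Walk l) (e : Sym2 V), e ∈ W.edgeFinset → e ∈ H := by
    intro l W e he
    obtain ⟨j, hj, hje⟩ := Finset.mem_image.mp he
    exact hje ▸ W.mem j (Finset.mem_range.mp hj)
  -- every cycle is odd
  have hoddcyc : ∀ (l : ℕ) (C : GH.Walk l), C.IsCycle → Odd l := by
    intro l C hC
    by_contra hnotodd
    have heven : Even l := Nat.not_odd_iff_even.mp hnotodd
    have hl : 0 < l := hC.2.1
    have hmem : ∀ i < l, C.edge i ∈ H := hedge_mem C
    have hz : ∀ v, ∑ e ∈ H, ccoef GH C e * G.rho e v = 0 := by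
      intro v
      have h := walk_rel GH C H (hs2 C) hmem v
      rw [hC.1, heven.neg_one_pow] at h
      rw [← hrho] at *
      rw [h]; ring
    have h0 := hindep (fun e => ((ccoef GH C e : ℤ) : ℝ)) (cast_rel G H _ hz) (C.edge 0)
      (hmem 0 hl)
    have h0' : ((ccoef GH C (C.edge 0) : ℤ) : ℝ) = 0 := h0
    have hz0 : ccoef GH C (C.edge 0) = 0 := by exact_mod_cast h0'
    have hodd := ccoef_odd hC (hsgns C)
      (Finset.mem_image.mpr ⟨0, Finset.mem_range.mpr hl, rfl⟩)
    rw [hz0] at hodd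
    exact (Int.not_odd_iff_even.mpr Even.zero) hodd
  refine ⟨hoddcyc, ?_⟩
  intro l₁ l₂ C C' hC hC' hcomp
  by_contra hne
  obtain ⟨p, W, hW0, hWp⟩ := hcomp
  obtain ⟨e₀, he₀⟩ : ∃ e, ¬ (e ∈ C.edgeFinset ↔ e ∈ C'.edgeFinset) := by
    by_contra h
    push_neg at h
    exact hne (Finset.ext fun e => h e)
  have hodd₁ : Odd l₁ := hoddcyc l₁ C hC
  have hodd₂ : Odd l₂ := hoddcyc l₂ C' hC'
  set z : Sym2 V → ℤ := fun e =>
    2 * ccoef GH W e + (-1)^p * ccoef GH C' e - ccoef GH C e with hzdef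
  have hz : ∀ v, ∑ e ∈ H, z e * G.rho e v = 0 := by
    intro v
    have hsplit : ∑ e ∈ H, z e * G.rho e v
        = 2 * (∑ e ∈ H, ccoef GH W e * G.rho e v)
          + (-1)^p * (∑ e ∈ H, ccoef GH C' e * G.rho e v)
          - (∑ e ∈ H, ccoef GH C e * G.rho e v) := by
      rw [Finset.mul_sum, Finset.mul_sum, ← Finset.sum_add_distrib, ← Finset.sum_sub_distrib]
      exact Finset.sum_congr rfl fun e _ => by simp only [hzdef]; ring
    rw [hsplit]
    have hW := walk_rel GH W H (hs2 W) (hedge_mem W) v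
    have hCr := walk_rel GH C H (hs2 C) (hedge_mem C) v
    have hC'r := walk_rel GH C' H (hs2 C') (hedge_mem C') v
    rw [hW0, hWp] at hW
    rw [hC.1, hodd₁.neg_one_pow] at hCr
    rw [hC'.1, hodd₂.neg_one_pow] at hC'r
    rw [← hrho] at *
    rw [hW, hCr, hC'r]
    ring
  have key : e₀ ∈ H ∧ Odd (z e₀) := by
    rcases Classical.em (e₀ ∈ C.edgeFinset) with h1 | h1 <;>
      rcases Classical.em (e₀ ∈ C'.edgeFinset) with h2 | h2
    · exact absurd (iff_of_true h1 h2) he₀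
    · obtain ⟨k, hk⟩ := ccoef_odd hC (hsgns C) h1
      refine ⟨edge_sub C e₀ h1, ⟨ccoef GH W e₀ - k - 1, ?_⟩⟩
      simp only [hzdef]
      rw [ccoef_of_notMem h2, hk]
      ring
    · obtain ⟨k, hk⟩ := ccoef_odd hC' (hsgns C') h2
      refine ⟨edge_sub C' e₀ h2, ?_⟩
      simp only [hzdef]
      rw [ccoef_of_notMem h1, hk]
      rcases Nat.even_or_odd p with hp | hp
      · rw [hp.neg_one_pow]
        exact ⟨ccoef GH W e₀ + k, by ring⟩
      · rw [hp.neg_one_pow]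
        exact ⟨ccoef GH W e₀ - k - 1, by ring⟩
    · exact absurd (iff_of_false h1 h2) he₀
  have h0 := hindep (fun e => ((z e : ℤ) : ℝ)) (cast_rel G H _ hz) e₀ key.1
  have h0' : ((z e₀ : ℤ) : ℝ) = 0 := h0
  have hz0 : z e₀ = 0 := by exact_mod_cast h0'
  obtain ⟨k, hk⟩ := key.2
  omega
end

section
/- Let G be a signed graph, alpha an element of Z·rho(E(G)) (an integral combination of edge vectors), and H a subgraph of G each of whose components is a tree or a unicyclic graph with odd cycle. Suppose alpha = sum_{e in H} a_e·rho(e) with 0 < a_e < 1 for all e. Then H is a disjoint union of odd cycles and a_e = 1/2 for all edges e of H. -/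
open Finset

/-- `H` is a disjoint union of odd cycles: every vertex has degree `0` or `2`
(loops counting twice) and every cycle in `H` is odd. -/
def IsDisjointUnionOfOddCycles {V : Type} [DecidableEq V] (G : SignedGraph V)
    (H : Finset (Sym2 V)) : Prop :=
  (∀ v : V, (∑ e ∈ H, SignedGraph.endSum e v) = 0 ∨ (∑ e ∈ H, SignedGraph.endSum e v) = 2) ∧
  ∀ (l : ℕ) (C : (G.restrict H).Walk l), C.IsCycle → Odd l


namespace S8

variable {V : Type} [DecidableEq V]

open SignedGraph

lemma endSum_pair (i j v : V) :
    endSum s(i,j) v = (if i = v then 1 else 0) + (if j = v then 1 else 0) := by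
  simp only [endSum, Sym2.lift_mk, Pi.add_apply]
  simp [Pi.single_apply, eq_comm]

lemma endSum_nonneg (e : Sym2 V) (v : V) : 0 ≤ endSum e v := by
  induction e using Sym2.inductionOn with
  | hf i j => rw [endSum_pair]; split <;> split <;> norm_num

lemma endSum_left (v w : V) : endSum s(v,w) v = if w = v then 2 else 1 := by
  rw [endSum_pair, if_pos rfl]; split <;> norm_num

lemma endSum_zero_of_notMem {e : Sym2 V} {v : V} (h : v ∉ e) : endSum e v = 0 := by
  induction e using Sym2.inductionOn with
  | hf i j =>
    rw [Sym2.mem_iff] at h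
    push_neg at h
    rw [endSum_pair, if_neg (fun hh => h.1 hh.symm), if_neg (fun hh => h.2 hh.symm)]; norm_num

lemma mem_of_endSum_ne {e : Sym2 V} {v : V} (h : endSum e v ≠ 0) : ∃ w, e = s(v, w) := by
  by_cases hv : v ∈ e
  · exact Sym2.mem_iff_exists.mp hv
  · exact absurd (endSum_zero_of_notMem hv) h

lemma endSum_le_two (e : Sym2 V) (v : V) : endSum e v ≤ 2 := by
  induction e using Sym2.inductionOn with
  | hf i j => rw [endSum_pair]; split <;> split <;> norm_num

end S8


namespace S8
section
variable {V : Type} [DecidableEq V]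
open SignedGraph

def deg (H : Finset (Sym2 V)) (v : V) : ℤ := ∑ e ∈ H, endSum e v

lemma deg_nonneg (H : Finset (Sym2 V)) (v : V) : 0 ≤ deg H v :=
  Finset.sum_nonneg fun e _ => endSum_nonneg e v

lemma single_le_deg {H : Finset (Sym2 V)} {e : Sym2 V} (h : e ∈ H) (v : V) :
    endSum e v ≤ deg H v :=
  Finset.single_le_sum (fun f _ => endSum_nonneg f v) h

lemma pair_le_deg {H : Finset (Sym2 V)} {e1 e2 : Sym2 V} (h1 : e1 ∈ H) (h2 : e2 ∈ H)
    (hne : e1 ≠ e2) (v : V) : endSum e1 v + endSum e2 v ≤ deg H v := by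
  have hsub : {e1, e2} ⊆ H := by
    intro x hx; rcases Finset.mem_insert.mp hx with h | h
    · exact h ▸ h1
    · exact (Finset.mem_singleton.mp h) ▸ h2
  calc endSum e1 v + endSum e2 v = ∑ e ∈ ({e1, e2} : Finset (Sym2 V)), endSum e v :=
        by rw [Finset.sum_pair hne]
    _ ≤ deg H v := Finset.sum_le_sum_of_subset_of_nonneg hsub
        fun f _ _ => endSum_nonneg f v

lemma triple_le_deg {H : Finset (Sym2 V)} {e1 e2 e3 : Sym2 V} (h1 : e1 ∈ H) (h2 : e2 ∈ H)
    (h3 : e3 ∈ H) (h12 : e1 ≠ e2) (h13 : e1 ≠ e3) (h23 : e2 ≠ e3) (v : V) :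
    endSum e1 v + endSum e2 v + endSum e3 v ≤ deg H v := by
  have hsub : {e1, e2, e3} ⊆ H := by
    intro x hx
    rcases Finset.mem_insert.mp hx with h | hx
    · exact h ▸ h1
    rcases Finset.mem_insert.mp hx with h | hx
    · exact h ▸ h2
    · exact (Finset.mem_singleton.mp hx) ▸ h3
  have hcard : ∑ e ∈ ({e1, e2, e3} : Finset (Sym2 V)), endSum e v
      = endSum e1 v + endSum e2 v + endSum e3 v := by
    rw [Finset.sum_insert (by simp [h12, h13]), Finset.sum_pair h23, add_assoc]
  calc endSum e1 v + endSum e2 v + endSum e3 v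
      = ∑ e ∈ ({e1, e2, e3} : Finset (Sym2 V)), endSum e v := hcard.symm
    _ ≤ deg H v := Finset.sum_le_sum_of_subset_of_nonneg hsub fun f _ _ => endSum_nonneg f v

variable {G : SignedGraph V} {H : Finset (Sym2 V)} {a : Sym2 V → ℝ} {α : V → ℤ}

/-- rewrite of the vertex equation -/
lemma key_sum (heq : ∀ v : V, ((α v : ℤ) : ℝ) = ∑ e ∈ H, a e * ((G.rho e v : ℤ) : ℝ)) (v : V) :
    ((α v : ℝ)) = ∑ e ∈ H, a e * (G.sgn e : ℝ) * ((endSum e v : ℤ) : ℝ) := by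
  rw [heq v]
  refine Finset.sum_congr rfl fun e _ => ?_
  have : G.rho e v = G.sgn e * endSum e v := rfl
  rw [this]; push_cast; ring

/-- if the incident edges at `v` are contained in `s`, the vertex sum localizes -/
lemma sum_localize (hvan : ∀ e ∈ H, e ∉ ({e1, e2} : Finset (Sym2 V)) → endSum e v = 0)
    (hsub : ({e1, e2} : Finset (Sym2 V)) ⊆ H) (hne : e1 ≠ e2)
    (heq : ∀ v : V, ((α v : ℤ) : ℝ) = ∑ e ∈ H, a e * ((G.rho e v : ℤ) : ℝ)) :
    ((α v : ℝ)) = a e1 * (G.sgn e1 : ℝ) * ((endSum e1 v : ℤ) : ℝ)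
      + a e2 * (G.sgn e2 : ℝ) * ((endSum e2 v : ℤ) : ℝ) := by
  rw [key_sum heq v, ← Finset.sum_subset hsub (fun e he hne' => by
    rw [hvan e he hne']; push_cast; ring), Finset.sum_pair hne]

lemma vanish_of_pair (h1 : e1 ∈ H) (h2 : e2 ∈ H) (hne : e1 ≠ e2) {v : V}
    (hv1 : endSum e1 v = 1) (hv2 : endSum e2 v = 1) (hdeg : deg H v ≤ 2) :
    ∀ e ∈ H, e ∉ ({e1, e2} : Finset (Sym2 V)) → endSum e v = 0 := by
  intro e he hne'
  by_contra h0
  have h1' : 1 ≤ endSum e v := by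
    have := endSum_nonneg e v; omega
  have hne1 : e1 ≠ e := fun h => hne' (by simp [h.symm])
  have hne2 : e2 ≠ e := fun h => hne' (by simp [h.symm])
  have := triple_le_deg h1 h2 he hne hne1 hne2 v
  omega

lemma rel_two (hH : H ⊆ G.edges) (hsgn : G.Proper)
    (heq : ∀ v : V, ((α v : ℤ) : ℝ) = ∑ e ∈ H, a e * ((G.rho e v : ℤ) : ℝ))
    (ha : ∀ e ∈ H, 0 < a e ∧ a e < 1)
    {e1 e2 : Sym2 V} (h1 : e1 ∈ H) (h2 : e2 ∈ H) (hne : e1 ≠ e2) {v : V}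
    (hv1 : endSum e1 v = 1) (hv2 : endSum e2 v = 1) (hdeg : deg H v ≤ 2) :
    (G.sgn e1 : ℝ) * (2 * a e1 - 1) + (G.sgn e2 : ℝ) * (2 * a e2 - 1) = 0 := by
  have hsub : ({e1, e2} : Finset (Sym2 V)) ⊆ H := by
    intro x hx; rcases Finset.mem_insert.mp hx with h | h
    · exact h ▸ h1
    · exact (Finset.mem_singleton.mp h) ▸ h2
  have hloc := sum_localize (vanish_of_pair h1 h2 hne hv1 hv2 hdeg) hsub hne heq
  rw [hv1, hv2] at hloc
  have ha1 := ha e1 h1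
  have ha2 := ha e2 h2
  -- LHS = 2 α v - (s1 + s2)
  have hkey : (G.sgn e1 : ℝ) * (2 * a e1 - 1) + (G.sgn e2 : ℝ) * (2 * a e2 - 1)
      = 2 * (α v : ℝ) - ((G.sgn e1 + G.sgn e2 : ℤ) : ℝ) := by
    rw [hloc]; push_cast; ring
  obtain ⟨n, hn⟩ : ∃ n : ℤ, (G.sgn e1 : ℝ) * (2 * a e1 - 1) + (G.sgn e2 : ℝ) * (2 * a e2 - 1)
      = 2 * (n : ℝ) := by
    rcases hsgn e1 (hH h1) with hs1 | hs1 <;> rcases hsgn e2 (hH h2) with hs2 | hs2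
    · exact ⟨α v - 1, by rw [hkey, hs1, hs2]; push_cast; ring⟩
    · exact ⟨α v, by rw [hkey, hs1, hs2]; push_cast; ring⟩
    · exact ⟨α v, by rw [hkey, hs1, hs2]; push_cast; ring⟩
    · exact ⟨α v + 1, by rw [hkey, hs1, hs2]; push_cast; ring⟩
  have hb1 : |(G.sgn e1 : ℝ) * (2 * a e1 - 1)| < 1 := by
    rcases hsgn e1 (hH h1) with hs | hs <;> rw [hs] <;> push_cast <;> rw [abs_lt] <;>
      constructor <;> nlinarith [ha1.1, ha1.2]
  have hb2 : |(G.sgn e2 : ℝ) * (2 * a e2 - 1)| < 1 := by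
    rcases hsgn e2 (hH h2) with hs | hs <;> rw [hs] <;> push_cast <;> rw [abs_lt] <;>
      constructor <;> nlinarith [ha2.1, ha2.2]
  have hn0 : n = 0 := by
    rw [abs_lt] at hb1 hb2
    have h2n : -2 < 2 * (n : ℝ) ∧ 2 * (n : ℝ) < 2 := by constructor <;> nlinarith
    have : -1 < (n : ℝ) ∧ (n : ℝ) < 1 := by constructor <;> linarith [h2n.1, h2n.2]
    exact_mod_cast by
      have h1' : (-1 : ℝ) < n := this.1
      have h2' : (n : ℝ) < 1 := this.2
      have : (-1 : ℤ) < n ∧ n < 1 := ⟨by exact_mod_cast h1', by exact_mod_cast h2'⟩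
      omega
  rw [hn, hn0]; norm_num

lemma rel_loop (hH : H ⊆ G.edges) (hsgn : G.Proper)
    (heq : ∀ v : V, ((α v : ℤ) : ℝ) = ∑ e ∈ H, a e * ((G.rho e v : ℤ) : ℝ))
    (ha : ∀ e ∈ H, 0 < a e ∧ a e < 1)
    {v : V} (hl : s(v,v) ∈ H) (hdeg : deg H v ≤ 2) : a s(v,v) = 1/2 := by
  have hend : endSum s(v,v) v = 2 := by rw [endSum_left, if_pos rfl]
  have hvan : ∀ e ∈ H, e ≠ s(v,v) → endSum e v = 0 := by
    intro e he hne
    by_contra h0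
    have h1' : 1 ≤ endSum e v := by have := endSum_nonneg e v; omega
    have := pair_le_deg hl he (Ne.symm hne) v
    omega
  have hloc : ((α v : ℝ)) = a s(v,v) * (G.sgn s(v,v) : ℝ) * 2 := by
    rw [key_sum heq v, Finset.sum_eq_single_of_mem s(v,v) hl (fun e he hne => by
      rw [hvan e he hne]; push_cast; ring), hend]
    push_cast; ring
  have haa := ha s(v,v) hl
  rcases hsgn s(v,v) (hH hl) with hs | hs <;> rw [hs] at hloc <;> push_cast at hloc
  · have h1' : (0 : ℝ) < α v := by nlinarith [haa.1]
    have h2' : (α v : ℝ) < 2 := by nlinarith [haa.2]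
    have : α v = 1 := by
      have : (0:ℤ) < α v ∧ α v < 2 := ⟨by exact_mod_cast h1', by exact_mod_cast h2'⟩
      omega
    rw [this] at hloc; push_cast at hloc; linarith
  · have h1' : (α v : ℝ) < 0 := by nlinarith [haa.1]
    have h2' : (-2 : ℝ) < α v := by nlinarith [haa.2]
    have : α v = -1 := by
      have : α v < (0:ℤ) ∧ (-2:ℤ) < α v := ⟨by exact_mod_cast h1', by exact_mod_cast h2'⟩
      omega
    rw [this] at hloc; push_cast at hloc; linarith

lemma deg_ne_one (hH : H ⊆ G.edges) (hsgn : G.Proper)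
    (heq : ∀ v : V, ((α v : ℤ) : ℝ) = ∑ e ∈ H, a e * ((G.rho e v : ℤ) : ℝ))
    (ha : ∀ e ∈ H, 0 < a e ∧ a e < 1) (v : V) : deg H v ≠ 1 := by
  intro hdeg
  obtain ⟨e0, he0, hne0⟩ : ∃ e0 ∈ H, endSum e0 v ≠ 0 := by
    by_contra hall
    push_neg at hall
    have : deg H v = 0 := Finset.sum_eq_zero hall
    omega
  have hle : endSum e0 v ≤ 1 := hdeg ▸ single_le_deg he0 v
  have he01 : endSum e0 v = 1 := by have := endSum_nonneg e0 v; omega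
  have hvan : ∀ e ∈ H, e ≠ e0 → endSum e v = 0 := by
    intro e he hne
    by_contra h0
    have h1' : 1 ≤ endSum e v := by have := endSum_nonneg e v; omega
    have := pair_le_deg he0 he (Ne.symm hne) v
    omega
  have hloc : ((α v : ℝ)) = a e0 * (G.sgn e0 : ℝ) := by
    rw [key_sum heq v, Finset.sum_eq_single_of_mem e0 he0 (fun e he hne => by
      rw [hvan e he hne]; push_cast; ring), he01]
    push_cast; ring
  have haa := ha e0 he0
  rcases hsgn e0 (hH he0) with hs | hs <;> rw [hs] at hloc <;> push_cast at hloc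
  · have h1' : (0 : ℝ) < α v := by nlinarith [haa.1]
    have h2' : (α v : ℝ) < 1 := by nlinarith [haa.2]
    have : (0:ℤ) < α v ∧ α v < 1 := ⟨by exact_mod_cast h1', by exact_mod_cast h2'⟩
    omega
  · have h1' : (α v : ℝ) < 0 := by nlinarith [haa.1]
    have h2' : (-1 : ℝ) < α v := by nlinarith [haa.2]
    have : α v < (0:ℤ) ∧ (-1:ℤ) < α v := ⟨by exact_mod_cast h1', by exact_mod_cast h2'⟩
    omega

end
end S8


namespace S8
section
variable {V : Type} [DecidableEq V]
open SignedGraph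

def vset (K : Finset (Sym2 V)) : Finset V :=
  K.biUnion fun e => Sym2.lift ⟨fun a b => {a, b}, fun a b => Finset.pair_comm a b⟩ e

lemma mem_vset_of {K : Finset (Sym2 V)} {v : V} {e : Sym2 V} (he : e ∈ K) (hv : v ∈ e) :
    v ∈ vset K := by
  rw [vset, Finset.mem_biUnion]
  refine ⟨e, he, ?_⟩
  induction e using Sym2.inductionOn with
  | hf i j =>
    rw [Sym2.mem_iff] at hv
    simp only [Sym2.lift_mk, Finset.mem_insert, Finset.mem_singleton]
    exact hv

/-- The fundamental path-extension lemma. -/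
lemma extend (K : Finset (Sym2 V)) (T : Finset V)
    (hdeg : ∀ v : V, v ∉ T → ∀ g ∈ K, v ∈ g →
      (s(v,v) ∈ K ∨ ∃ g' ∈ K, v ∈ g' ∧ g' ≠ g))
    (u0 u1 : V) (hne : u0 ≠ u1) (hf : s(u0,u1) ∈ K) :
    ∃ (m : ℕ) (p : ℕ → V), 1 ≤ m ∧ p 0 = u0 ∧ p 1 = u1 ∧
      (∀ i < m, s(p i, p (i+1)) ∈ K) ∧
      (∀ i ≤ m, ∀ j ≤ m, p i = p j → i = j) ∧
      (∀ i, 1 ≤ i → i < m → p i ∉ T) ∧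
      (p m ∈ T ∨
        (p m ∉ T ∧ (s(p m, p m) ∈ K ∨ ∃ j, j + 2 ≤ m ∧ s(p j, p m) ∈ K))) := by
  suffices h : ∀ n : ℕ, ∀ (m : ℕ) (p : ℕ → V), 1 ≤ m → p 0 = u0 → p 1 = u1 →
      (∀ i < m, s(p i, p (i+1)) ∈ K) →
      (∀ i ≤ m, ∀ j ≤ m, p i = p j → i = j) →
      (∀ i, 1 ≤ i → i < m → p i ∉ T) →
      (vset K).card ≤ m + n →
      ∃ (m : ℕ) (p : ℕ → V), 1 ≤ m ∧ p 0 = u0 ∧ p 1 = u1 ∧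
        (∀ i < m, s(p i, p (i+1)) ∈ K) ∧
        (∀ i ≤ m, ∀ j ≤ m, p i = p j → i = j) ∧
        (∀ i, 1 ≤ i → i < m → p i ∉ T) ∧
        (p m ∈ T ∨
          (p m ∉ T ∧ (s(p m, p m) ∈ K ∨ ∃ j, j + 2 ≤ m ∧ s(p j, p m) ∈ K))) by
    refine h (vset K).card 1 (fun i => if i = 0 then u0 else u1) le_rfl rfl rfl ?_ ?_
        (fun i hi1 hi2 => by omega) (by omega)
    · intro i hi
      have hi0 : i = 0 := by omega
      subst hi0
      simpa using hf
    · intro i hi j hj hij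
      match i, hi, j, hj with
      | 0, _, 0, _ => rfl
      | 0, _, 1, _ => exact absurd hij (by simp [hne])
      | 1, _, 0, _ => exact absurd hij (by simp [hne.symm])
      | 1, _, 1, _ => rfl
  intro n
  induction n with
  | zero =>
    intro m p h1 h2 h3 hedge hinj hT hcard
    exfalso
    have hmem : ∀ i ≤ m, p i ∈ vset K := by
      intro i hi
      rcases Nat.lt_or_ge i m with h | h
      · exact mem_vset_of (hedge i h) (Sym2.mem_mk_left _ _)
      · have him : i = m := by omega
        have := hedge (m-1) (by omega)
        rw [Nat.sub_add_cancel h1] at this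
        exact him ▸ mem_vset_of this (Sym2.mem_mk_right _ _)
    have hcard2 : (Finset.range (m+1)).card ≤ (vset K).card := by
      apply Finset.card_le_card_of_injOn p
      · intro i hi
        exact hmem i (by simpa using Nat.lt_succ_iff.mp (Finset.mem_range.mp hi))
      · intro i hi j hj hij
        exact hinj i (Nat.lt_succ_iff.mp (Finset.mem_range.mp hi))
          j (Nat.lt_succ_iff.mp (Finset.mem_range.mp hj)) hij
    rw [Finset.card_range] at hcard2
    omega
  | succ n ih =>
    intro m p h1 h2 h3 hedge hinj hT hcard
    by_cases hTm : p m ∈ T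
    · exact ⟨m, p, h1, h2, h3, hedge, hinj, hT, Or.inl hTm⟩
    have hg : s(p (m-1), p m) ∈ K := by
      have := hedge (m-1) (by omega)
      rwa [Nat.sub_add_cancel h1] at this
    rcases hdeg (p m) hTm _ hg (Sym2.mem_mk_right _ _) with hloop | ⟨g', hg'K, hmemg', hg'ne⟩
    · exact ⟨m, p, h1, h2, h3, hedge, hinj, hT, Or.inr ⟨hTm, Or.inl hloop⟩⟩
    obtain ⟨x, hx⟩ := Sym2.mem_iff_exists.mp hmemg'
    by_cases hxold : ∃ j ≤ m, p j = x
    · obtain ⟨j, hj, hjx⟩ := hxold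
      rcases Nat.lt_or_ge j m with hjm | hjm
      · rcases Nat.lt_or_ge j (m-1) with hjm1 | hjm1
        · -- chord
          refine ⟨m, p, h1, h2, h3, hedge, hinj, hT, Or.inr ⟨hTm, Or.inr ⟨j, by omega, ?_⟩⟩⟩
          rw [hjx, Sym2.eq_swap, ← hx]
          exact hg'K
        · -- j = m - 1 : g' = g, contradiction
          exfalso
          have hj1 : j = m - 1 := by omega
          apply hg'ne
          rw [hx, ← hjx, hj1, Sym2.eq_swap]
      · -- j = m : loop
        have hjm' : j = m := by omega
        refine ⟨m, p, h1, h2, h3, hedge, hinj, hT, Or.inr ⟨hTm, Or.inl ?_⟩⟩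
        have hxm : x = p m := by rw [← hjx, hjm']
        rw [hxm] at hx
        exact hx ▸ hg'K
    · push_neg at hxold
      set q : ℕ → V := fun i => if i = m + 1 then x else p i with hq
      have hq1 : ∀ i, i ≠ m + 1 → q i = p i := fun i hi => if_neg hi
      have hq2 : q (m+1) = x := if_pos rfl
      refine ih (m+1) q (by omega) ?_ ?_ ?_ ?_ ?_ (by omega)
      · rw [hq1 0 (by omega)]; exact h2
      · rw [hq1 1 (by omega)]; exact h3
      · intro i hi
        rcases Nat.lt_or_ge i m with him | him
        · rw [hq1 i (by omega), hq1 (i+1) (by omega)]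
          exact hedge i him
        · have him' : i = m := by omega
          subst him'
          rw [hq1 i (by omega), hq2, ← hx]
          exact hg'K
      · intro i hi j hj hij
        by_cases hi' : i = m + 1 <;> by_cases hj' : j = m + 1
        · omega
        · exfalso
          rw [hi', hq2, hq1 j hj'] at hij
          exact hxold j (by omega) hij.symm
        · exfalso
          rw [hj', hq2, hq1 i hi'] at hij
          exact hxold i (by omega) hij
        · rw [hq1 i hi', hq1 j hj'] at hij
          exact hinj i (by omega) j (by omega) hij
      · intro i hi1 hi2
        rw [hq1 i (by omega)]
        rcases Nat.lt_or_ge i m with him | him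
        · exact hT i hi1 him
        · have hq3 : i = m := by omega
          subst hq3
          exact hTm

end
end S8


namespace S8
section
variable {V : Type} [DecidableEq V]
open SignedGraph

lemma sc_of_fun (G' : SignedGraph V) (p : ℕ → V) (n : ℕ)
    (h : ∀ i < n, s(p i, p (i+1)) ∈ G'.edges) : G'.SameComponent (p 0) (p n) :=
  ⟨n, ⟨p, h⟩, rfl, rfl⟩

lemma sc_refl (G' : SignedGraph V) (v : V) : G'.SameComponent v v :=
  ⟨0, ⟨fun _ => v, fun i h => absurd h (Nat.not_lt_zero i)⟩, rfl, rfl⟩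

lemma sc_trans {G' : SignedGraph V} {u v w : V} :
    G'.SameComponent u v → G'.SameComponent v w → G'.SameComponent u w := by
  rintro ⟨n1, W1, h10, h11⟩ ⟨n2, W2, h20, h21⟩
  set q : ℕ → V := fun i => if i < n1 then W1.vert i else W2.vert (i - n1) with hqdef
  have hq1 : ∀ i, i < n1 → q i = W1.vert i := fun i hi => if_pos hi
  have hq2 : ∀ i, n1 ≤ i → q i = W2.vert (i - n1) := fun i hi => if_neg (by omega)
  refine ⟨n1 + n2, ⟨q, ?_⟩, ?_, ?_⟩
  · intro i hi
    rcases Nat.lt_or_ge (i+1) n1 with h' | h'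
    · rw [hq1 i (by omega), hq1 (i+1) h']
      exact W1.mem i (by omega)
    rcases Nat.lt_or_ge i n1 with h'' | h''
    · -- i + 1 = n1
      have hi1 : i + 1 = n1 := by omega
      rw [hq1 i h'', hq2 (i+1) h']
      have : W2.vert (i + 1 - n1) = W1.vert (i+1) := by
        rw [hi1, Nat.sub_self, h20, ← h11]
      rw [this]
      exact W1.mem i h''
    · rw [hq2 i h'', hq2 (i+1) (by omega)]
      have : i + 1 - n1 = (i - n1) + 1 := by omega
      rw [this]
      exact W2.mem (i - n1) (by omega)
  · show q 0 = u
    rcases Nat.eq_zero_or_pos n1 with h | h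
    · subst h
      rw [hq2 0 le_rfl, Nat.sub_zero, h20, ← h11, h10]
    · rw [hq1 0 h]; exact h10
  · show q (n1+n2) = w
    rw [hq2 (n1+n2) (by omega), Nat.add_sub_cancel_left]; exact h21

lemma loop_cycle (G' : SignedGraph V) {v : V} (h : s(v,v) ∈ G'.edges) :
    ∃ C : G'.Walk 1, C.IsCycle ∧ C.vert 0 = v ∧ (∀ f ∈ C.edgeFinset, f = s(v,v)) ∧
      s(v,v) ∈ C.edgeFinset := by
  refine ⟨⟨fun _ => v, fun i hi => h⟩, ⟨rfl, one_pos, by omega, fun i hi j hj _ => by omega⟩,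
    rfl, ?_, ?_⟩
  · intro f hf
    simp only [Walk.edgeFinset, Finset.mem_image, Finset.mem_range] at hf
    obtain ⟨i, _, hi⟩ := hf
    rw [← hi]; rfl
  · exact Finset.mem_image.mpr ⟨0, by simp, rfl⟩

lemma chord_cycle (G' : SignedGraph V) (p : ℕ → V) (j m : ℕ) (hjm : j + 2 ≤ m)
    (hedge : ∀ i < m, s(p i, p (i+1)) ∈ G'.edges)
    (hinj : ∀ i ≤ m, ∀ i' ≤ m, p i = p i' → i = i')
    (hchord : s(p j, p m) ∈ G'.edges) :
    ∃ C : G'.Walk (m - j + 1), C.IsCycle ∧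
      (∀ i < m - j + 1, C.vert i = p (j + i)) ∧ C.vert (m - j + 1) = p j := by
  set l := m - j + 1 with hl
  set q : ℕ → V := fun i => if i < l then p (j + i) else p j with hqdef
  have hq1 : ∀ i, i < l → q i = p (j + i) := fun i hi => if_pos hi
  have hq2 : ∀ i, l ≤ i → q i = p j := fun i hi => if_neg (by omega)
  refine ⟨⟨q, ?_⟩, ⟨?_, by omega, by omega, ?_⟩, hq1, hq2 l le_rfl⟩
  · intro i hi
    rcases Nat.lt_or_ge (i+1) l with h' | h'
    · rw [hq1 i (by omega), hq1 (i+1) h']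
      have : j + (i + 1) = (j + i) + 1 := by omega
      rw [this]
      exact hedge (j + i) (by omega)
    · -- i + 1 = l, i.e. i = m - j
      rw [hq1 i (by omega), hq2 (i+1) h']
      have hji : j + i = m := by omega
      rw [hji, Sym2.eq_swap]
      exact hchord
  · show q l = q 0
    rw [hq2 l le_rfl, hq1 0 (by omega), Nat.add_zero]
  · intro i hi i' hi' hii
    have hii' : q i = q i' := hii
    rw [hq1 i hi, hq1 i' hi'] at hii'
    have hii := hii'
    have := hinj (j + i) (by omega) (j + i') (by omega) hii
    omega

lemma sum_image_le {β : Type} [DecidableEq β] (s : Finset β) (g : β → Sym2 V)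
    (F : Sym2 V → ℤ) (h0 : ∀ f, 0 ≤ F f) :
    ∑ f ∈ s.image g, F f ≤ ∑ i ∈ s, F (g i) := by
  induction s using Finset.induction with
  | empty => simp
  | @insert b s hb ih =>
    rw [Finset.image_insert, Finset.sum_insert hb]
    by_cases hg : g b ∈ s.image g
    · rw [Finset.insert_eq_self.mpr hg]
      linarith [h0 (g b)]
    · rw [Finset.sum_insert hg]
      linarith

lemma cycle_endSum_le (G' : SignedGraph V) {l : ℕ} (C : G'.Walk l) (hC : C.IsCycle) :
    ∑ f ∈ C.edgeFinset, endSum f (C.vert 0) ≤ 2 := by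
  obtain ⟨hcl, hl0, hl2, hinj⟩ := hC
  have h1 : ∑ f ∈ C.edgeFinset, endSum f (C.vert 0)
      ≤ ∑ i ∈ Finset.range l, endSum (C.edge i) (C.vert 0) :=
    sum_image_le _ _ _ (fun f => endSum_nonneg f _)
  have h2 : ∀ i ∈ Finset.range l, endSum (C.edge i) (C.vert 0)
      ≤ (if i = 0 then 1 else 0) + (if i = l - 1 then 1 else 0) := by
    intro i hi
    rw [Finset.mem_range] at hi
    rw [Walk.edge, endSum_pair]
    gcongr
    · split
      · next h =>
        have : i = 0 := hinj i hi 0 hl0 h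
        simp [this]
      · split <;> norm_num
    · split
      · next h =>
        have hil : i = l - 1 := by
          rcases Nat.lt_or_ge (i+1) l with h' | h'
          · have := hinj (i+1) h' 0 hl0 h
            omega
          · omega
        simp [hil]
      · split <;> norm_num
  have h3 : ∑ i ∈ Finset.range l, endSum (C.edge i) (C.vert 0)
      ≤ ∑ i ∈ Finset.range l, ((if i = 0 then 1 else 0) + (if i = l - 1 then 1 else 0) : ℤ) :=
    Finset.sum_le_sum h2
  have h4 : ∑ i ∈ Finset.range l, ((if i = 0 then 1 else 0) + (if i = l - 1 then 1 else 0) : ℤ)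
      = 2 := by
    rw [Finset.sum_add_distrib, Finset.sum_ite_eq' (Finset.range l) 0,
      Finset.sum_ite_eq' (Finset.range l) (l-1)]
    simp only [Finset.mem_range]
    rw [if_pos hl0, if_pos (by omega)]
    norm_num
  omega

end
end S8


namespace S8
section
variable {V : Type} [DecidableEq V]
open SignedGraph

lemma edge_mem_edgeFinset {G' : SignedGraph V} {l : ℕ} (W : G'.Walk l) {i : ℕ} (hi : i < l) :
    W.edge i ∈ W.edgeFinset :=
  Finset.mem_image.mpr ⟨i, Finset.mem_range.mpr hi, rfl⟩

lemma mem_edgeFinset_iff {G' : SignedGraph V} {l : ℕ} (W : G'.Walk l) {f : Sym2 V} :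
    f ∈ W.edgeFinset ↔ ∃ i < l, W.edge i = f := by
  simp [Walk.edgeFinset, Finset.mem_image]

lemma no_theta (G : SignedGraph V) (H : Finset (Sym2 V))
    (hgood2 : ∀ (l₁ l₂ : ℕ) (C : (G.restrict H).Walk l₁) (C' : (G.restrict H).Walk l₂),
      C.IsCycle → C'.IsCycle → (G.restrict H).SameComponent (C.vert 0) (C'.vert 0) →
      C.edgeFinset = C'.edgeFinset)
    {l : ℕ} (C : (G.restrict H).Walk l) (hC : C.IsCycle)
    (p : ℕ → V) (m : ℕ) (hm : 1 ≤ m) (t : ℕ) (ht : t < l) (ht0 : t ≠ 0)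
    (hp0 : p 0 = C.vert 0) (hpm : p m = C.vert t)
    (hedge : ∀ i < m, s(p i, p (i+1)) ∈ H)
    (hinj : ∀ i ≤ m, ∀ j ≤ m, p i = p j → i = j)
    (hoff : ∀ i, 1 ≤ i → i < m → ∀ k < l, p i ≠ C.vert k)
    (hf0 : s(p 0, p 1) ∉ C.edgeFinset) : False := by
  obtain ⟨hcl, hl0, hl2, hcinj⟩ := hC
  set LD := m + (l - t) with hLD
  set q : ℕ → V := fun i => if i ≤ m then p i else C.vert (t + (i - m)) with hqdef
  have hq1 : ∀ i, i ≤ m → q i = p i := fun i hi => if_pos hi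
  have hqc : ∀ i, m ≤ i → q i = C.vert (t + (i - m)) := by
    intro i hi
    rcases Nat.lt_or_ge m i with h | h
    · exact if_neg (by omega)
    · have him : i = m := by omega
      subst him
      rw [hq1 i le_rfl, Nat.sub_self, Nat.add_zero, hpm]
  have hmemD : ∀ i < LD, s(q i, q (i+1)) ∈ (G.restrict H).edges := by
    intro i hi
    rcases Nat.lt_or_ge i m with h | h
    · rw [hq1 i (by omega), hq1 (i+1) (by omega)]
      exact hedge i h
    · rw [hqc i h, hqc (i+1) (by omega)]
      set k := t + (i - m) with hk
      have hkl : k < l := by omega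
      have : t + (i + 1 - m) = k + 1 := by omega
      rw [this]
      exact C.mem k hkl
  have hDcl : q LD = q 0 := by
    rw [hqc LD (by omega), hq1 0 (by omega), hp0]
    have : t + (LD - m) = l := by omega
    rw [this, hcl]
  have hDinj : ∀ i < LD, ∀ j < LD, q i = q j → i = j := by
    have key : ∀ i ≤ m, ∀ j, m < j → j < LD → q i ≠ q j := by
      intro i hi j hj1 hj2 hqq
      rw [hq1 i hi, hqc j (by omega)] at hqq
      set k := t + (j - m) with hk
      have hk1 : t < k := by omega
      have hk2 : k < l := by omega
      rcases Nat.eq_zero_or_pos i with h0 | h0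
      · subst h0
        rw [hp0] at hqq
        have := hcinj 0 hl0 k hk2 hqq
        omega
      rcases Nat.lt_or_ge i m with him | him
      · exact hoff i h0 him k hk2 hqq
      · have : i = m := by omega
        subst this
        rw [hpm] at hqq
        have := hcinj t ht k hk2 hqq
        omega
    intro i hi j hj hqq
    rcases le_or_gt i m with hi' | hi' <;> rcases le_or_gt j m with hj' | hj'
    · rw [hq1 i hi', hq1 j hj'] at hqq
      exact hinj i hi' j hj' hqq
    · exact absurd hqq (key i hi' j hj' hj)
    · exact absurd hqq.symm (key j hj' i hi' hi)
    · rw [hqc i (by omega), hqc j (by omega)] at hqq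
      have := hcinj (t + (i - m)) (by omega) (t + (j - m)) (by omega) hqq
      omega
  set D : (G.restrict H).Walk LD := ⟨q, hmemD⟩ with hD
  have hDcyc : D.IsCycle := by
    refine ⟨hDcl, by omega, ?_, hDinj⟩
    intro h2
    apply hf0
    have hm1 : m = 1 := by omega
    have htl : t = l - 1 := by omega
    have h1 : p 1 = C.vert (l-1) := by rw [← htl, ← hm1, hpm]
    have : s(p 0, p 1) = C.edge (l-1) := by
      rw [Walk.edge, hp0, h1, Sym2.eq_swap]
      congr 1
      rw [Nat.sub_add_cancel hl0, hcl]
    rw [this]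
    exact edge_mem_edgeFinset C (by omega)
  have hsc : (G.restrict H).SameComponent (C.vert 0) (D.vert 0) := by
    have : D.vert 0 = C.vert 0 := by
      show q 0 = C.vert 0
      rw [hq1 0 (by omega), hp0]
    rw [this]
    exact sc_refl _ _
  have hEq := hgood2 l LD C D ⟨hcl, hl0, hl2, hcinj⟩ hDcyc hsc
  apply hf0
  rw [hEq]
  have : D.edge 0 = s(p 0, p 1) := by
    show s(q 0, q 1) = s(p 0, p 1)
    rw [hq1 0 (by omega), hq1 1 (by omega)]
  rw [← this]
  exact edge_mem_edgeFinset D (by omega)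

end
end S8


namespace S8
section
variable {V : Type} [DecidableEq V]
open SignedGraph

lemma not_two_cycles {G : SignedGraph V} {H : Finset (Sym2 V)}
    (hgood2 : ∀ (l₁ l₂ : ℕ) (C : (G.restrict H).Walk l₁) (C' : (G.restrict H).Walk l₂),
      C.IsCycle → C'.IsCycle → (G.restrict H).SameComponent (C.vert 0) (C'.vert 0) →
      C.edgeFinset = C'.edgeFinset)
    {l1 l2 : ℕ} {C : (G.restrict H).Walk l1} {C' : (G.restrict H).Walk l2}
    (hC : C.IsCycle) (hC' : C'.IsCycle)
    (hsc : (G.restrict H).SameComponent (C.vert 0) (C'.vert 0))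
    {f : Sym2 V} (hf2 : f ∈ C'.edgeFinset) (hf1 : f ∉ C.edgeFinset) : False :=
  hf1 ((hgood2 l1 l2 C C' hC hC' hsc) ▸ hf2)

lemma phaseB (G : SignedGraph V) (H : Finset (Sym2 V))
    (hgood2 : ∀ (l₁ l₂ : ℕ) (C : (G.restrict H).Walk l₁) (C' : (G.restrict H).Walk l₂),
      C.IsCycle → C'.IsCycle → (G.restrict H).SameComponent (C.vert 0) (C'.vert 0) →
      C.edgeFinset = C'.edgeFinset)
    (hdeg : ∀ v : V, ∀ g ∈ H, v ∈ g → (s(v,v) ∈ H ∨ ∃ g' ∈ H, v ∈ g' ∧ g' ≠ g))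
    {l : ℕ} (C : (G.restrict H).Walk l) (hC : C.IsCycle)
    {x : V} (hg : s(C.vert 0, x) ∈ H) (hgE : s(C.vert 0, x) ∉ C.edgeFinset) : False := by
  obtain ⟨hcl, hl0, hl2, hcinj⟩ := hC
  set T : Finset V := (Finset.range l).image C.vert with hT
  have hTmem : ∀ y, y ∈ T ↔ ∃ k < l, C.vert k = y := by
    intro y; simp [hT, Finset.mem_image]
  by_cases hx : x = C.vert 0
  · -- loop at C.vert 0
    rw [hx] at hg
    obtain ⟨C', hC'cyc, hC'v, _, hC'mem⟩ := loop_cycle (G.restrict H) (v := C.vert 0) hg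
    refine not_two_cycles hgood2 ⟨hcl, hl0, hl2, hcinj⟩ hC'cyc ?_ ?_ hgE
    · rw [hC'v]; exact sc_refl _ _
    · rw [hx]
      exact hC'mem
  · obtain ⟨m, p, hm, hp0, hp1, hedge, hinj, hTavoid, hterm⟩ :=
      extend H T (fun v _ => hdeg v) (C.vert 0) x (fun h => hx h.symm) hg
    rcases hterm with hfin | ⟨hTm, hfin⟩
    · -- hit the cycle: theta
      obtain ⟨t, htl, htv⟩ := (hTmem (p m)).mp hfin
      have ht0 : t ≠ 0 := by
        intro h
        subst h
        have : p m = p 0 := by rw [← htv, hp0]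
        have := hinj m le_rfl 0 (by omega) this
        omega
      refine no_theta G H hgood2 C ⟨hcl, hl0, hl2, hcinj⟩ p m hm t htl ht0 hp0 htv.symm
        hedge hinj ?_ ?_
      · intro i hi1 hi2 k hk hpk
        exact (hTavoid i hi1 hi2) ((hTmem (p i)).mpr ⟨k, hk, hpk.symm⟩)
      · rw [hp0, hp1]
        exact hgE
    · -- second cycle, loop or chord
      rcases hfin with hloop | ⟨j, hj2, hchord⟩
      · obtain ⟨C', hC'cyc, hC'v, hC'ef, hC'mem⟩ := loop_cycle (G.restrict H) (v := p m) hloop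
        refine not_two_cycles hgood2 ⟨hcl, hl0, hl2, hcinj⟩ hC'cyc ?_
          (f := s(p m, p m)) ?_ ?_
        · rw [hC'v, ← hp0]
          exact sc_of_fun (G.restrict H) p m hedge
        · exact hC'mem
        · intro hmem
          obtain ⟨i, hil, hie⟩ := (mem_edgeFinset_iff C).mp hmem
          rw [Walk.edge] at hie
          rw [Sym2.eq_iff] at hie
          have : C.vert i = p m := by tauto
          exact hTm ((hTmem (p m)).mpr ⟨i, hil, this⟩)
      · obtain ⟨C', hC'cyc, hC'spec, hC'last⟩ :=
          chord_cycle (G.restrict H) p j m hj2 hedge hinj hchord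
        have hlen : 1 < m - j + 1 := by omega
        have hv0 : C'.vert 0 = p j := by rw [hC'spec 0 (by omega)]; norm_num
        have hv1 : C'.vert 1 = p (j+1) := by rw [hC'spec 1 hlen]
        refine not_two_cycles hgood2 ⟨hcl, hl0, hl2, hcinj⟩ hC'cyc ?_
          (f := s(p j, p (j+1))) ?_ ?_
        · rw [hv0, ← hp0]
          exact sc_of_fun (G.restrict H) p j (fun i hi => hedge i (by omega))
        · have : C'.edge 0 = s(p j, p (j+1)) := by rw [Walk.edge, hv0, hv1]
          rw [← this]
          exact edge_mem_edgeFinset C' (by omega)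
        · intro hmem
          obtain ⟨i, hil, hie⟩ := (mem_edgeFinset_iff C).mp hmem
          rw [Walk.edge, Sym2.eq_iff] at hie
          have hj1 : p (j+1) = C.vert i ∨ p (j+1) = C.vert (i+1) := by tauto
          have hj1T : p (j+1) ∈ T := by
            rcases hj1 with h | h
            · exact (hTmem _).mpr ⟨i, hil, h.symm⟩
            · rcases Nat.lt_or_ge (i+1) l with h' | h'
              · exact (hTmem _).mpr ⟨i+1, h', h.symm⟩
              · have hil' : i + 1 = l := by omega
                rw [hil', hcl] at h
                exact (hTmem _).mpr ⟨0, hl0, h.symm⟩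
          exact (hTavoid (j+1) (by omega) (by omega)) hj1T
end
end S8


namespace S8
section
variable {V : Type} [DecidableEq V]
open SignedGraph

lemma edgeFinset_subset {G : SignedGraph V} {H : Finset (Sym2 V)} {l : ℕ}
    (C : (G.restrict H).Walk l) : C.edgeFinset ⊆ H := by
  intro f hf
  obtain ⟨i, hi, he⟩ := (mem_edgeFinset_iff C).mp hf
  exact he ▸ C.mem i hi

lemma extra_edge {G : SignedGraph V} {H : Finset (Sym2 V)} {l : ℕ}
    (C : (G.restrict H).Walk l) (hC : C.IsCycle) (h3 : 3 ≤ deg H (C.vert 0)) :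
    ∃ y, s(C.vert 0, y) ∈ H ∧ s(C.vert 0, y) ∉ C.edgeFinset := by
  have hle := cycle_endSum_le _ C hC
  have hsplit : ∑ f ∈ H \ C.edgeFinset, endSum f (C.vert 0)
      + ∑ f ∈ C.edgeFinset, endSum f (C.vert 0) = deg H (C.vert 0) :=
    Finset.sum_sdiff (edgeFinset_subset C)
  obtain ⟨f, hfmem, hfne⟩ : ∃ f ∈ H \ C.edgeFinset, endSum f (C.vert 0) ≠ 0 := by
    by_contra hall
    push_neg at hall
    have : ∑ f ∈ H \ C.edgeFinset, endSum f (C.vert 0) = 0 := Finset.sum_eq_zero hall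
    omega
  obtain ⟨y, hy⟩ := mem_of_endSum_ne hfne
  rw [Finset.mem_sdiff] at hfmem
  exact ⟨y, hy ▸ hfmem.1, hy ▸ hfmem.2⟩

lemma deg_le_two {G : SignedGraph V} {H : Finset (Sym2 V)}
    (hgood2 : ∀ (l₁ l₂ : ℕ) (C : (G.restrict H).Walk l₁) (C' : (G.restrict H).Walk l₂),
      C.IsCycle → C'.IsCycle → (G.restrict H).SameComponent (C.vert 0) (C'.vert 0) →
      C.edgeFinset = C'.edgeFinset)
    (hdeg : ∀ v : V, ∀ g ∈ H, v ∈ g → (s(v,v) ∈ H ∨ ∃ g' ∈ H, v ∈ g' ∧ g' ≠ g))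
    (v : V) (h3 : 3 ≤ deg H v) : False := by
  obtain ⟨f0, hf0, hne0⟩ : ∃ f0 ∈ H, endSum f0 v ≠ 0 := by
    by_contra hall
    push_neg at hall
    have : deg H v = 0 := Finset.sum_eq_zero hall
    omega
  obtain ⟨x, hx⟩ := mem_of_endSum_ne hne0
  rw [hx] at hf0
  by_cases hxv : x = v
  · rw [hxv] at hf0
    obtain ⟨C, hCcyc, hCv, _, _⟩ := loop_cycle (G.restrict H) (v := v) hf0
    obtain ⟨y, hyH, hyE⟩ := extra_edge C hCcyc (by rw [hCv]; exact h3)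
    exact phaseB G H hgood2 hdeg C hCcyc hyH hyE
  · obtain ⟨m, p, hm, hp0, hp1, hedge, hinj, _, hterm⟩ :=
      extend H ∅ (fun u _ => hdeg u) v x (fun h => hxv h.symm) hf0
    rcases hterm with hemp | ⟨_, hloop | ⟨j, hj2, hchord⟩⟩
    · simp at hemp
    · obtain ⟨C, hCcyc, hCv, hCef, _⟩ := loop_cycle (G.restrict H) hloop
      apply phaseB G H hgood2 hdeg C hCcyc (x := p (m-1)) ?_ ?_
      · rw [hCv, Sym2.eq_swap]
        have := hedge (m-1) (by omega)
        rwa [Nat.sub_add_cancel hm] at this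
      · intro hmem
        have heq := hCef _ hmem
        rw [hCv, Sym2.eq_iff] at heq
        have : p (m-1) = p m := by tauto
        have := hinj (m-1) (by omega) m le_rfl this
        omega
    · obtain ⟨C, hCcyc, hCspec, hClast⟩ := chord_cycle (G.restrict H) p j m hj2 hedge hinj hchord
      have hv0 : C.vert 0 = p j := by rw [hCspec 0 (by omega)]; norm_num
      rcases Nat.eq_zero_or_pos j with hj0 | hj0
      · subst hj0
        obtain ⟨y, hyH, hyE⟩ := extra_edge C hCcyc (by rw [hv0, hp0]; exact h3)
        exact phaseB G H hgood2 hdeg C hCcyc hyH hyE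
      · apply phaseB G H hgood2 hdeg C hCcyc (x := p (j-1)) ?_ ?_
        · rw [hv0, Sym2.eq_swap]
          have := hedge (j-1) (by omega)
          rwa [Nat.sub_add_cancel hj0] at this
        · intro hmem
          obtain ⟨i, hil, hie⟩ := (mem_edgeFinset_iff C).mp hmem
          rw [Walk.edge, hv0] at hie
          rcases Nat.lt_or_ge (i+1) (m - j + 1) with h' | h'
          · rw [hCspec i hil, hCspec (i+1) h', Sym2.eq_iff] at hie
            rcases hie with ⟨ha, hb⟩ | ⟨ha, hb⟩
            · have h1 := hinj (j+i) (by omega) j (by omega) ha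
              have h2 := hinj (j+i+1) (by omega) (j-1) (by omega) hb
              omega
            · have h1 := hinj (j+i) (by omega) (j-1) (by omega) ha
              omega
          · have hi1 : i + 1 = m - j + 1 := by omega
            rw [hCspec i hil, hi1, hClast, Sym2.eq_iff] at hie
            have hji : j + i = m := by omega
            rw [hji] at hie
            rcases hie with ⟨ha, hb⟩ | ⟨ha, hb⟩
            · have h1 := hinj m le_rfl j (by omega) ha
              omega
            · have h1 := hinj m le_rfl (j-1) (by omega) ha
              omega
end
end S8


namespace S8
section
variable {V : Type} [DecidableEq V]
open SignedGraph


lemma pair_ne {a b c d : V} (h : a = c → b = d → False) (h' : a = d → b = c → False) :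
    s(a,b) ≠ s(c,d) := by
  intro hh
  rcases Sym2.eq_iff.mp hh with ⟨h1, h2⟩ | ⟨h1, h2⟩
  · exact h h1 h2
  · exact h' h1 h2

lemma hdeg_of {G : SignedGraph V} {H : Finset (Sym2 V)} {a : Sym2 V → ℝ} {α : V → ℤ}
    (hH : H ⊆ G.edges) (hsgn : G.Proper)
    (heq : ∀ v : V, ((α v : ℤ) : ℝ) = ∑ e ∈ H, a e * ((G.rho e v : ℤ) : ℝ))
    (ha : ∀ e ∈ H, 0 < a e ∧ a e < 1) :
    ∀ v : V, ∀ g ∈ H, v ∈ g → (s(v,v) ∈ H ∨ ∃ g' ∈ H, v ∈ g' ∧ g' ≠ g) := by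
  intro v g hgH hvg
  by_cases hl : s(v,v) ∈ H
  · exact Or.inl hl
  right
  by_contra hno
  push_neg at hno
  apply deg_ne_one hH hsgn heq ha v
  obtain ⟨w, hw⟩ := Sym2.mem_iff_exists.mp hvg
  have hwv : w ≠ v := by
    intro h
    rw [h] at hw
    rw [hw] at hgH
    exact hl hgH
  have h1 : endSum g v = 1 := by rw [hw, endSum_left, if_neg hwv]
  have : deg H v = endSum g v := by
    apply Finset.sum_eq_single_of_mem g hgH
    intro e he hne
    by_contra h0
    obtain ⟨y, hy⟩ := mem_of_endSum_ne h0
    exact hne (hno e he (hy ▸ Sym2.mem_mk_left v y))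
  rw [this, h1]

lemma half {G : SignedGraph V} {H : Finset (Sym2 V)} {a : Sym2 V → ℝ} {α : V → ℤ}
    (hH : H ⊆ G.edges) (hsgn : G.Proper)
    (heq : ∀ v : V, ((α v : ℤ) : ℝ) = ∑ e ∈ H, a e * ((G.rho e v : ℤ) : ℝ))
    (ha : ∀ e ∈ H, 0 < a e ∧ a e < 1)
    (hgood1 : ∀ (l : ℕ) (C : (G.restrict H).Walk l), C.IsCycle → Odd l)
    (hdeg : ∀ v : V, ∀ g ∈ H, v ∈ g → (s(v,v) ∈ H ∨ ∃ g' ∈ H, v ∈ g' ∧ g' ≠ g))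
    (hdeg2 : ∀ v : V, deg H v ≤ 2) :
    ∀ e ∈ H, a e = 1/2 := by
  intro e he
  induction e using Sym2.inductionOn with
  | hf x y =>
    by_cases hxy : y = x
    · rw [hxy] at he ⊢
      exact rel_loop hH hsgn heq ha he (hdeg2 x)
    have hne : x ≠ y := fun h => hxy h.symm
    obtain ⟨m, p, hm, hp0, hp1, hedge, hinj, _, hterm⟩ :=
      extend H ∅ (fun u _ => hdeg u) x y hne he
    have hpne : ∀ i i', i ≤ m → i' ≤ m → i ≠ i' → p i ≠ p i' :=
      fun i i' hi hi' hii h => hii (hinj i hi i' hi' h)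
    rcases hterm with hemp | ⟨_, hloop | ⟨j, hj2, hchord⟩⟩
    · simp at hemp
    · exfalso
      have hlast := hedge (m-1) (by omega)
      rw [Nat.sub_add_cancel hm] at hlast
      have hne2 : s(p m, p m) ≠ s(p (m-1), p m) :=
        pair_ne (fun h _ => hpne (m-1) m (by omega) le_rfl (by omega) h.symm)
          (fun _ h => hpne (m-1) m (by omega) le_rfl (by omega) h.symm)
      have hp2 := pair_le_deg hloop hlast hne2 (p m)
      have e1 : endSum s(p m, p m) (p m) = 2 := by rw [endSum_left, if_pos rfl]
      have e2 : endSum s(p (m-1), p m) (p m) = 1 := by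
        rw [Sym2.eq_swap, endSum_left, if_neg (hpne (m-1) m (by omega) le_rfl (by omega))]
      have := hdeg2 (p m)
      omega
    rcases Nat.eq_zero_or_pos j with hj0 | hj0
    swap
    · exfalso
      have hE1 := hedge (j-1) (by omega)
      rw [Nat.sub_add_cancel hj0] at hE1
      have hE2 := hedge j (by omega)
      have hne12 : s(p (j-1), p j) ≠ s(p j, p (j+1)) :=
        pair_ne (fun h _ => hpne (j-1) j (by omega) (by omega) (by omega) h)
          (fun h _ => hpne (j-1) (j+1) (by omega) (by omega) (by omega) h)
      have hne13 : s(p (j-1), p j) ≠ s(p j, p m) :=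
        pair_ne (fun h _ => hpne (j-1) j (by omega) (by omega) (by omega) h)
          (fun h _ => hpne (j-1) m (by omega) le_rfl (by omega) h)
      have hne23 : s(p j, p (j+1)) ≠ s(p j, p m) :=
        pair_ne (fun _ h => hpne (j+1) m (by omega) le_rfl (by omega) h)
          (fun h _ => hpne j m (by omega) le_rfl (by omega) h)
      have htr := triple_le_deg hE1 hE2 hchord hne12 hne13 hne23 (p j)
      have e1 : endSum s(p (j-1), p j) (p j) = 1 := by
        rw [Sym2.eq_swap, endSum_left, if_neg (hpne (j-1) j (by omega) (by omega) (by omega))]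
      have e2 : endSum s(p j, p (j+1)) (p j) = 1 := by
        rw [endSum_left, if_neg (hpne (j+1) j (by omega) (by omega) (by omega))]
      have e3 : endSum s(p j, p m) (p j) = 1 := by
        rw [endSum_left, if_neg (hpne m j le_rfl (by omega) (by omega))]
      have := hdeg2 (p j)
      omega
    subst hj0
    -- main case: cycle through the edge
    have hm2 : 2 ≤ m := by omega
    obtain ⟨C, hCcyc, hCspec, hClast⟩ :=
      chord_cycle (G.restrict H) p 0 m (by omega) hedge hinj hchord
    have hOdd : Odd (m - 0 + 1) := hgood1 _ C hCcyc
    have hEvenm : Even m := by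
      obtain ⟨k, hk⟩ := hOdd
      exact ⟨k, by omega⟩
    set E : ℕ → Sym2 V := fun i => if i < m then s(p i, p (i+1)) else s(p m, p 0) with hEdef
    have hE1 : ∀ k, k < m → E k = s(p k, p (k+1)) := fun k hk => if_pos hk
    have hE2 : E m = s(p m, p 0) := if_neg (by omega)
    have hEmem : ∀ k ≤ m, E k ∈ H := by
      intro k hk
      rcases Nat.lt_or_ge k m with h | h
      · rw [hE1 k h]; exact hedge k h
      · have : k = m := by omega
        rw [this, hE2, Sym2.eq_swap]; exact hchord
    have hrel : ∀ k < m, (G.sgn (E k) : ℝ) * (2 * a (E k) - 1)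
        + (G.sgn (E (k+1)) : ℝ) * (2 * a (E (k+1)) - 1) = 0 := by
      intro k hk
      apply rel_two hH hsgn heq ha (hEmem k (by omega)) (hEmem (k+1) (by omega))
        ?_ (v := p (k+1)) ?_ ?_ (hdeg2 _)
      · rcases Nat.lt_or_ge (k+1) m with h | h
        · rw [hE1 k hk, hE1 (k+1) h]
          exact pair_ne (fun h' _ => hpne k (k+1) (by omega) (by omega) (by omega) h')
            (fun h' _ => hpne k (k+2) (by omega) (by omega) (by omega) h')
        · have hkm : k + 1 = m := by omega
          rw [hE1 k hk, hkm, hE2]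
          exact pair_ne (fun h' _ => hpne k m (by omega) le_rfl (by omega) h')
            (fun h' _ => hpne k 0 (by omega) (by omega) (by omega) h')
      · rw [hE1 k hk, Sym2.eq_swap, endSum_left,
          if_neg (hpne k (k+1) (by omega) (by omega) (by omega))]
      · rcases Nat.lt_or_ge (k+1) m with h | h
        · rw [hE1 (k+1) h, endSum_left,
            if_neg (hpne (k+2) (k+1) (by omega) (by omega) (by omega))]
        · have hkm : k + 1 = m := by omega
          rw [hkm, hE2, endSum_left, if_neg (hpne 0 m (by omega) le_rfl (by omega))]
    have hrelw : (G.sgn (E m) : ℝ) * (2 * a (E m) - 1)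
        + (G.sgn (E 0) : ℝ) * (2 * a (E 0) - 1) = 0 := by
      apply rel_two hH hsgn heq ha (hEmem m le_rfl) (hEmem 0 (by omega))
        ?_ (v := p 0) ?_ ?_ (hdeg2 _)
      · rw [hE2, hE1 0 (by omega)]
        exact pair_ne (fun h' _ => hpne m 0 le_rfl (by omega) (by omega) h')
          (fun h' _ => hpne m 1 le_rfl (by omega) (by omega) h')
      · rw [hE2, Sym2.eq_swap, endSum_left, if_neg (hpne m 0 le_rfl (by omega) (by omega))]
      · rw [hE1 0 (by omega), endSum_left, if_neg (hpne 1 0 (by omega) (by omega) (by omega))]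
    have hind : ∀ k, k ≤ m → (G.sgn (E k) : ℝ) * (2 * a (E k) - 1)
        = (-1 : ℝ)^k * ((G.sgn (E 0) : ℝ) * (2 * a (E 0) - 1)) := by
      intro k
      induction k with
      | zero => intro _; simp
      | succ n ih =>
        intro hk
        have h1 := hrel n (by omega)
        have h2 := ih (by omega)
        have h3 : (G.sgn (E (n+1)) : ℝ) * (2 * a (E (n+1)) - 1)
            = -((G.sgn (E n) : ℝ) * (2 * a (E n) - 1)) := by linarith
        rw [h3, h2, pow_succ]
        ring
    have hzero : (G.sgn (E 0) : ℝ) * (2 * a (E 0) - 1) = 0 := by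
      have h1 := hind m le_rfl
      rw [Even.neg_one_pow hEvenm, one_mul] at h1
      linarith
    have hE0 : E 0 = s(x, y) := by rw [hE1 0 (by omega), hp0, hp1]
    rw [hE0] at hzero
    rcases hsgn s(x,y) (hH he) with hs | hs <;> rw [hs] at hzero <;> push_cast at hzero <;>
      linarith
end
end S8


/-- if a lattice vector is written over such a subgraph `H` with
all weights strictly between `0` and `1`, then `H` is a disjoint union of odd
cycles and all weights are `1/2`. -/
theorem statement8 {V : Type} [DecidableEq V] (G : SignedGraph V) (hsgn : G.Proper)
    (α : V → ℤ) (hlat : ∃ c : Sym2 V → ℤ, α = ∑ e ∈ G.edges, c e • G.rho e)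
    (H : Finset (Sym2 V)) (hH : H ⊆ G.edges) (hgood : TreeOrUnicyclicOdd G H)
    (a : Sym2 V → ℝ) (ha : ∀ e ∈ H, 0 < a e ∧ a e < 1)
    (heq : ∀ v : V, ((α v : ℤ) : ℝ) = ∑ e ∈ H, a e * ((G.rho e v : ℤ) : ℝ)) :
    IsDisjointUnionOfOddCycles G H ∧ ∀ e ∈ H, a e = 1 / 2 := by
  obtain ⟨hgood1, hgood2⟩ := hgood
  have hdeg := S8.hdeg_of hH hsgn heq ha
  have hdeg2 : ∀ v : V, S8.deg H v ≤ 2 := by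
    intro v
    by_contra h
    push_neg at h
    exact S8.deg_le_two hgood2 hdeg v (by omega)
  refine ⟨⟨?_, hgood1⟩, S8.half hH hsgn heq ha hgood1 hdeg hdeg2⟩
  intro v
  have h1 := S8.deg_ne_one hH hsgn heq ha v
  have h2 := hdeg2 v
  have h3 := S8.deg_nonneg H v
  have : S8.deg H v = 0 ∨ S8.deg H v = 2 := by omega
  exact this
end

section
/- Let G be a signed graph with two disjoint odd cycles C_1, C_2 in the same component, and suppose there is a sign-alternating path P between C_1 and C_2 whose interior is disjoint from C_1 ∪ C_2. Then the monomial prod_{v in C_1} x_v^{sig_{C_1}(v)} · prod_{v in C_2} x_v^{sig_{C_2}(v)} belongs to the edge ring k[G]. -/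
open Finset

section Aux

open SignedGraph SignedGraph.Walk

variable {V : Type} [DecidableEq V]

private lemma mono_add' (k : Type) [Field k] (a b : V → ℤ) :
    mono k (a + b) = mono k a * mono k b := by
  simp [mono, AddMonoidAlgebra.single_mul_single]

private lemma mono_zero' (k : Type) [Field k] :
    mono k (0 : V → ℤ) = 1 := rfl

private lemma sum01_mem (k : Type) [Field k] (G : SignedGraph V) (n : ℕ) (f : ℕ → Sym2 V)
    (c : ℕ → ℤ) (hf : ∀ i < n, f i ∈ G.edges) (hc : ∀ i < n, c i = 0 ∨ c i = 1) :
    mono k (∑ i ∈ Finset.range n, c i • G.rho (f i)) ∈ edgeRing k G := by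
  induction n with
  | zero => simp only [Finset.range_zero, Finset.sum_empty, mono_zero']; exact one_mem _
  | succ n ih =>
    rw [Finset.sum_range_succ, mono_add']
    refine mul_mem (ih (fun i hi => hf i (by omega)) (fun i hi => hc i (by omega))) ?_
    rcases hc n (by omega) with h | h
    · rw [h, zero_smul, mono_zero']; exact one_mem _
    · rw [h, one_smul]
      exact Algebra.subset_adjoin ⟨f n, hf n (by omega), rfl⟩

private lemma mod2l {l x : ℕ} (hl : 0 < l) (h : x < 2 * l) :
    x % l = if x < l then x else x - l := by
  split
  · exact Nat.mod_eq_of_lt ‹_›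
  · rw [Nat.mod_eq_sub_mod (by omega), Nat.mod_eq_of_lt (by omega)]

private lemma walk_sum_apply {G : SignedGraph V} {l : ℕ} (W : G.Walk l) (g : ℕ → ℤ) (v : V) :
    (∑ i ∈ Finset.range l, g i • G.rho (W.edge i)) v
      = ∑ i ∈ Finset.range l, g i * G.sgn (W.edge i) *
          ((if v = W.vert i then 1 else 0) + (if v = W.vert (i + 1) then 1 else 0)) := by
  rw [Finset.sum_apply]
  refine Finset.sum_congr rfl fun i _ => ?_
  show g i • (G.sgn (W.edge i) • endSum (W.edge i)) v = _
  have : endSum (W.edge i) = Pi.single (W.vert i) 1 + Pi.single (W.vert (i+1)) 1 := by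
    simp [Walk.edge, endSum]
  rw [this]
  simp [Pi.single_apply, mul_assoc]

private lemma shift_sum {G : SignedGraph V} {l : ℕ} (W : G.Walk l) (hcl : W.IsClosed)
    (hl : 0 < l) (g : ℕ → ℤ) (v : V) :
    ∑ i ∈ Finset.range l, g i * (if v = W.vert (i + 1) then 1 else 0)
      = ∑ i ∈ Finset.range l, g ((i + l - 1) % l) * (if v = W.vert i then 1 else 0) := by
  have key : ∀ a < l, ((a + 1) % l + l - 1) % l = a := by
    intro a ha
    have hm : (a + 1) % l = if a + 1 < l then a + 1 else a + 1 - l := mod2l hl (by omega)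
    rw [mod2l hl (by rw [hm]; split <;> omega), hm]
    split_ifs <;> omega
  have hv : ∀ a < l, W.vert ((a + 1) % l) = W.vert (a + 1) := by
    intro a ha
    by_cases h : a + 1 < l
    · rw [Nat.mod_eq_of_lt h]
    · have h' : a + 1 = l := by omega
      rw [h', Nat.mod_self]; exact hcl.symm
  refine Finset.sum_nbij' (fun i => (i + 1) % l) (fun i => (i + l - 1) % l)
    (fun a ha => Finset.mem_range.2 (Nat.mod_lt _ hl))
    (fun a ha => Finset.mem_range.2 (Nat.mod_lt _ hl)) ?_ ?_ ?_
  · intro a ha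
    have ha' := Finset.mem_range.1 ha
    exact key a ha'
  · intro a ha
    have ha' := Finset.mem_range.1 ha
    show ((a + l - 1) % l + 1) % l = a
    have hm : (a + l - 1) % l = if a + l - 1 < l then a + l - 1 else a + l - 1 - l :=
      mod2l hl (by omega)
    rw [mod2l hl (by rw [hm]; split <;> omega), hm]
    split_ifs <;> omega
  · intro a ha
    have ha' := Finset.mem_range.1 ha
    show g a * _ = g (((a + 1) % l + l - 1) % l) * _
    rw [key a ha', hv a ha']
private lemma cyc_exists {G : SignedGraph V} (hsgn : G.Proper) {l : ℕ} (C : G.Walk l)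
    (hcl : C.IsClosed) (hodd : Odd l) {j : ℕ} (hj : j < l) (t : ℤ) (ht : t = 1 ∨ t = -1) :
    ∃ c : ℕ → ℤ, (∀ i, c i = 0 ∨ c i = 1) ∧
      (∑ i ∈ Finset.range l, c i • G.rho (C.edge i))
        = C.cycVec - t • Pi.single (C.vert j) 1 := by
  have hl : 0 < l := hodd.pos
  set E : ℕ → ℕ := fun i => (i + l - j) % l with hE
  set ε : ℕ → ℤ := fun i => -t * (-1) ^ (E i) with hε
  have hS : ∀ m < l, G.sgn (C.edge m) = 1 ∨ G.sgn (C.edge m) = -1 :=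
    fun m hm => hsgn _ (C.mem m hm)
  have hep : ∀ m, ε m = 1 ∨ ε m = -1 := by
    intro m
    rcases Nat.even_or_odd (E m) with h | h
    · rcases ht with h' | h' <;> simp [hε, h.neg_one_pow, h']
    · rcases ht with h' | h' <;> simp [hε, h.neg_one_pow, h']
  have hcs : ∀ m < l, 2 * ((if ε m = G.sgn (C.edge m) then (1:ℤ) else 0) * G.sgn (C.edge m))
      = G.sgn (C.edge m) + ε m := by
    intro m hm
    by_cases hc : ε m = G.sgn (C.edge m)
    · rw [if_pos hc, hc]; ring
    · rw [if_neg hc]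
      rcases hS m hm with h1 | h1 <;> rcases hep m with h2 | h2
      · exact absurd (h2.trans h1.symm) hc
      · rw [h1, h2]; ring
      · rw [h1, h2]; ring
      · exact absurd (h2.trans h1.symm) hc
  have hsig : ∀ m < l, 2 * C.sig m
      = G.sgn (C.edge ((m + l - 1) % l)) + G.sgn (C.edge m) := by
    intro m hm
    show 2 * ((G.sgn (C.edge ((m + l - 1) % l)) + G.sgn (C.edge (m % l))) / 2) = _
    rw [Nat.mod_eq_of_lt hm]
    rcases hS _ (Nat.mod_lt (m + l - 1) hl) with h1 | h1 <;>
      rcases hS m hm with h2 | h2 <;> rw [h1, h2] <;> decide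
  have hpar : ∀ i < l, ε i + ε ((i + l - 1) % l) = if i = j then -(2 * t) else 0 := by
    intro i hi
    by_cases hij : i = j
    · have e1 : E i = 0 := by
        show (i + l - j) % l = 0
        have h' : i + l - j = l := by omega
        rw [h', Nat.mod_self]
      have e2 : E ((i + l - 1) % l) = l - 1 := by
        show ((i + l - 1) % l + l - j) % l = l - 1
        have hm : (i + l - 1) % l = if i + l - 1 < l then i + l - 1 else i + l - 1 - l :=
          mod2l hl (by omega)
        rw [mod2l hl (by rw [hm]; split <;> omega), hm]
        split_ifs <;> omega
      have hev : Even (l - 1) := Nat.Odd.sub_odd hodd odd_one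
      rw [if_pos hij]
      simp only [hε, e1, e2, pow_zero, hev.neg_one_pow]
      ring
    · have e3 : E i = E ((i + l - 1) % l) + 1 := by
        show (i + l - j) % l = ((i + l - 1) % l + l - j) % l + 1
        have hm : (i + l - 1) % l = if i + l - 1 < l then i + l - 1 else i + l - 1 - l :=
          mod2l hl (by omega)
        rw [mod2l hl (by omega), mod2l hl (by rw [hm]; split <;> omega), hm]
        split_ifs <;> omega
      rw [if_neg hij]
      simp only [hε, e3, pow_succ]
      ring
  refine ⟨fun i => if ε i = G.sgn (C.edge i) then 1 else 0, fun i => by rcases eq_or_ne (ε i) (G.sgn (C.edge i)) with h | h <;> simp [h], ?_⟩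
  funext v
  rw [walk_sum_apply C (fun i => if ε i = G.sgn (C.edge i) then (1:ℤ) else 0) v]
  simp only [mul_add]
  rw [Finset.sum_add_distrib,
    shift_sum C hcl hl (fun i => (if ε i = G.sgn (C.edge i) then (1:ℤ) else 0) * G.sgn (C.edge i)) v,
    ← Finset.sum_add_distrib]
  have hRHS : ((C.cycVec - t • Pi.single (C.vert j) 1 : V → ℤ)) v
      = ∑ i ∈ Finset.range l,
          ((C.sig i - if i = j then t else 0) * (if v = C.vert i then 1 else 0)) := by
    rw [Pi.sub_apply]
    have h1 : C.cycVec v = ∑ i ∈ Finset.range l, C.sig i * (if v = C.vert i then 1 else 0) := by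
      show (∑ i ∈ Finset.range l, if C.vert i = v then C.sig i else 0) = _
      refine Finset.sum_congr rfl fun i _ => ?_
      by_cases h : C.vert i = v
      · simp [h]
      · simp [h, Ne.symm h]
    have h2 : ((t • Pi.single (C.vert j) (1:ℤ) : V → ℤ)) v
        = ∑ i ∈ Finset.range l, (if i = j then t else 0) * (if v = C.vert i then 1 else 0) := by
      simp only [ite_mul, zero_mul]
      rw [Finset.sum_ite_eq' (Finset.range l) j
        (fun i => t * (if v = C.vert i then 1 else 0)), if_pos (Finset.mem_range.2 hj)]
      simp [Pi.single_apply]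
    rw [h1, h2, ← Finset.sum_sub_distrib]
    exact Finset.sum_congr rfl fun i _ => by ring
  rw [hRHS]
  refine Finset.sum_congr rfl fun i hi => ?_
  have hi' : i < l := Finset.mem_range.1 hi
  have hco : (if ε i = G.sgn (C.edge i) then (1:ℤ) else 0) * G.sgn (C.edge i)
      + (if ε ((i + l - 1) % l) = G.sgn (C.edge ((i + l - 1) % l)) then (1:ℤ) else 0)
          * G.sgn (C.edge ((i + l - 1) % l))
      = C.sig i - (if i = j then t else 0) := by
    have h1 := hcs i hi'
    have h2 := hcs ((i + l - 1) % l) (Nat.mod_lt (i + l - 1) hl)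
    have h3 := hsig i hi'
    have h4 := hpar i hi'
    by_cases hij : i = j
    · rw [if_pos hij] at h4 ⊢; linarith
    · rw [if_neg hij] at h4 ⊢; linarith
  show _ * _ + _ * _ = _
  rw [← add_mul]
  rw [hco]

private lemma path_sum {G : SignedGraph V} {p : ℕ} (P : G.Walk p) (halt : P.Alternating)
    (hp : 0 < p) :
    ∑ i ∈ Finset.range p, G.rho (P.edge i)
      = G.sgn (P.edge 0) • Pi.single (P.vert 0) 1
        + G.sgn (P.edge (p - 1)) • Pi.single (P.vert p) 1 := by
  obtain ⟨m, rfl⟩ : ∃ m, p = m + 1 := ⟨p - 1, by omega⟩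
  simp only [Nat.add_sub_cancel]
  funext v
  have h0 : (∑ i ∈ Finset.range (m + 1), G.rho (P.edge i)) v
      = ∑ i ∈ Finset.range (m + 1), G.sgn (P.edge i) *
          ((if v = P.vert i then 1 else 0) + (if v = P.vert (i + 1) then 1 else 0)) := by
    rw [show (∑ i ∈ Finset.range (m + 1), G.rho (P.edge i))
        = ∑ i ∈ Finset.range (m + 1), (1:ℤ) • G.rho (P.edge i) by simp,
      walk_sum_apply]
    simp only [one_mul]
  rw [Pi.add_apply, h0]
  simp only [mul_add]
  rw [Finset.sum_add_distrib, Finset.sum_range_succ', Finset.sum_range_succ]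
  have hmid : ∑ i ∈ Finset.range m, G.sgn (P.edge (i + 1)) * (if v = P.vert (i + 1) then 1 else 0)
      + ∑ i ∈ Finset.range m, G.sgn (P.edge i) * (if v = P.vert (i + 1) then 1 else 0) = 0 := by
    rw [← Finset.sum_add_distrib]
    refine Finset.sum_eq_zero fun i hi => ?_
    rw [halt i (by have := Finset.mem_range.1 hi; omega)]
    ring
  have hs : ∀ (s : ℤ) (w : V), ((s • Pi.single w (1:ℤ) : V → ℤ)) v = s * (if v = w then 1 else 0) := by
    intro s w; simp [Pi.single_apply]
  rw [hs, hs]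
  linarith [hmid]

end Aux

/-- if two disjoint odd cycles are joined by an alternating path
whose interior avoids both cycles, then the associated monomial lies in the
edge ring. -/
theorem statement11 {V : Type} [DecidableEq V] (k : Type) [Field k]
    (G : SignedGraph V) (hsgn : G.Proper)
    {l₁ l₂ p : ℕ} (C : G.Walk l₁) (C' : G.Walk l₂) (P : G.Walk p)
    (hC : C.IsCycle) (hC' : C'.IsCycle) (h₁ : Odd l₁) (h₂ : Odd l₂)
    (hdisj : SignedGraph.DisjointCycles C C')
    (hP : P.IsPath) (halt : P.Alternating)
    (hP0 : ∃ i < l₁, P.vert 0 = C.vert i) (hPp : ∃ j < l₂, P.vert p = C'.vert j)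
    (hint : ∀ i, 0 < i → i < p → ¬C.HasVert (P.vert i) ∧ ¬C'.HasVert (P.vert i)) :
    mono k (C.cycVec + C'.cycVec) ∈ edgeRing k G := by
  obtain ⟨i₀, hi₀, hPv0⟩ := hP0
  obtain ⟨j₀, hj₀, hPvp⟩ := hPp
  have hp : 0 < p := by
    rcases Nat.eq_zero_or_pos p with h | h
    · subst h
      exact absurd (hPv0.symm.trans hPvp) (hdisj i₀ hi₀ j₀ hj₀)
    · exact h
  have ht₁ : G.sgn (P.edge 0) = 1 ∨ G.sgn (P.edge 0) = -1 := hsgn _ (P.mem 0 hp)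
  have ht₂ : G.sgn (P.edge (p - 1)) = 1 ∨ G.sgn (P.edge (p - 1)) = -1 :=
    hsgn _ (P.mem (p - 1) (by omega))
  obtain ⟨c₁, hc₁, hs₁⟩ := cyc_exists hsgn C hC.1 h₁ hi₀ _ ht₁
  obtain ⟨c₂, hc₂, hs₂⟩ := cyc_exists hsgn C' hC'.1 h₂ hj₀ _ ht₂
  have hpath := path_sum P halt hp
  have key : C.cycVec + C'.cycVec
      = (∑ i ∈ Finset.range l₁, c₁ i • G.rho (C.edge i))
        + (∑ i ∈ Finset.range l₂, c₂ i • G.rho (C'.edge i))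
        + ∑ i ∈ Finset.range p, (1 : ℤ) • G.rho (P.edge i) := by
    have h3 : ∑ i ∈ Finset.range p, (1 : ℤ) • G.rho (P.edge i)
        = ∑ i ∈ Finset.range p, G.rho (P.edge i) := by simp
    rw [h3, hs₁, hs₂, hpath, hPv0, hPvp]
    abel
  rw [key, mono_add', mono_add']
  exact mul_mem (mul_mem
    (sum01_mem k G l₁ _ c₁ (fun i hi => C.mem i hi) (fun i _ => hc₁ i))
    (sum01_mem k G l₂ _ c₂ (fun i hi => C'.mem i hi) (fun i _ => hc₂ i)))
    (sum01_mem k G p _ (fun _ => 1) (fun i hi => P.mem i hi) (fun i _ => Or.inr rfl))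
end

section
/- Let G be a mixed signed, directed graph and let G~ be its augmented signed graph, obtained by replacing each directed edge (i,j) by a new vertex t and signed edges -it and +tj. Then k[G~] ∩ k[x_1^{±1},...,x_n^{±1}] = k[G], where the intersection is taken inside the Laurent ring including the new variables t_e. -/
open Finset

/-- A mixed signed, directed graph: signed edges and directed edges. -/
structure MixedGraph (V : Type) where
  sedges : Finset (Sym2 V)
  sgn : Sym2 V → ℤ
  dedges : Finset (V × V)

/-- The sign function takes values `±1` on signed edges, and there are no
directed loops. -/
def MixedGraph.Proper {V : Type} (G : MixedGraph V) : Prop :=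
  (∀ e ∈ G.sedges, G.sgn e = 1 ∨ G.sgn e = -1) ∧ ∀ d ∈ G.dedges, d.1 ≠ d.2

/-- Projection from the augmented vertex set back to `V`. -/
def aproj {V : Type} : V ⊕ (V × V) → V := Sum.elim id Prod.fst

open scoped Classical in
/-- The augmented signed graph of a mixed signed, directed graph: each directed
edge `(i,j)` is replaced by an artificial vertex `t = (i,j)` together with the
signed edges `-it` and `+tj`. -/
noncomputable def MixedGraph.augment {V : Type} [DecidableEq V] (G : MixedGraph V) :
    SignedGraph (V ⊕ (V × V)) where
  edges :=
    G.sedges.image (Sym2.map Sum.inl) ∪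
      G.dedges.image (fun d => s((Sum.inl d.1 : V ⊕ (V × V)), Sum.inr d)) ∪
      G.dedges.image (fun d => s((Sum.inr d : V ⊕ (V × V)), Sum.inl d.2))
  sgn := fun e =>
    if ∃ d ∈ G.dedges, e = s((Sum.inl d.1 : V ⊕ (V × V)), Sum.inr d) then -1
    else if ∃ d ∈ G.dedges, e = s((Sum.inr d : V ⊕ (V × V)), Sum.inl d.2) then 1
    else G.sgn (e.map aproj)

/-- The exponent vector `e_j - e_i` of the generator `x_i⁻¹ x_j` of a directed
edge `(i,j)`. -/
def dirVec {V : Type} [DecidableEq V] (d : V × V) : V → ℤ :=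
  Pi.single d.2 1 - Pi.single d.1 1

/-- The edge ring of a mixed signed, directed graph, generated by
`(x_i x_j)^{sgn(ij)}` over signed edges and `x_i⁻¹ x_j` over directed edges. -/
noncomputable def mixedEdgeRing (k : Type) [Field k] {V : Type} [DecidableEq V]
    (G : MixedGraph V) : Subalgebra k (AddMonoidAlgebra k (V → ℤ)) :=
  Algebra.adjoin k
    ((fun e => mono k (G.sgn e • SignedGraph.endSum e)) '' ↑G.sedges ∪
      (fun d => mono k (dirVec d)) '' ↑G.dedges)


/-- Extension of an exponent vector on `V` by zero on the artificial
vertices. -/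
def extHom {V : Type} : (V → ℤ) →+ ((V ⊕ (V × V)) → ℤ) where
  toFun z := Sum.elim z 0
  map_zero' := by funext w; cases w <;> rfl
  map_add' a b := by funext w; cases w <;> simp

/-!
An edge ring generated by the monomials `x^z`, `z ∈ Z`, consists of the Laurent polynomials
supported in the additive monoid generated by `Z`, so everything reduces to exponent monoids.
Since `ρ((i,j)) = ρ(-i t) + ρ(+t j)`, the monoid of `G` sits inside that of `G~` with vanishing
`t`-coordinates. Conversely, the additive map `z ↦ z - ∑_d z(t_d) ρ(+t_d j)` fixes the vectors
with vanishing `t`-coordinates and sends every generator of the monoid of `G~` into the monoid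
of `G`; this is where `i ≠ j` for directed edges enters, making the sign of `+t_d j` positive.
-/

namespace AddMonoidAlgebra

variable {R M N : Type} [CommSemiring R] [AddCommMonoid M] [AddCommMonoid N]

theorem single_one_mem_adjoin {Z : Set M} {m : M} (hm : m ∈ AddSubmonoid.closure Z) :
    single m (1 : R) ∈ Algebra.adjoin R ((fun z => single z (1 : R)) '' Z) := by
  induction hm using AddSubmonoid.closure_induction with
  | mem z hz => exact Algebra.subset_adjoin ⟨z, hz, rfl⟩
  | zero => exact one_mem _
  | add x y _ _ hx hy =>
      simpa only [single_mul_single, one_mul] using mul_mem hx hy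

theorem mem_adjoin_single_one_iff {Z : Set M} {a : AddMonoidAlgebra R M} :
    a ∈ Algebra.adjoin R ((fun z => single z (1 : R)) '' Z) ↔
      ↑a.coeff.support ⊆ (AddSubmonoid.closure Z : Set M) := by
  classical
  constructor
  · intro ha
    induction ha using Algebra.adjoin_induction with
    | mem x hx =>
        obtain ⟨z, hz, rfl⟩ := hx
        intro m hm
        obtain rfl := Finset.mem_singleton.1 (Finsupp.support_single_subset hm)
        exact AddSubmonoid.subset_closure hz
    | algebraMap r =>
        intro m hm
        obtain rfl := Finset.mem_singleton.1 (Finsupp.support_single_subset hm)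
        exact zero_mem _
    | add x y _ _ hx hy =>
        intro m hm
        rcases Finset.mem_union.1 (Finsupp.support_add hm) with h | h
        exacts [hx h, hy h]
    | mul x y _ _ hx hy =>
        intro m hm
        obtain ⟨u, hu, v, hv, rfl⟩ := Finset.mem_add.1 (support_coeff_mul_subset x y hm)
        exact add_mem (hx hu) (hy hv)
  · intro ha
    rw [← sum_coeff_single a]
    refine sum_mem fun m hm => ?_
    rw [← mul_one (a.coeff m), ← smul_eq_mul, ← smul_single]
    exact Subalgebra.smul_mem _ (single_one_mem_adjoin (ha hm)) _

theorem map_mapDomainAlgHom_adjoin_single_one (f : M →+ N) (Z : Set M) :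
    (Algebra.adjoin R ((fun z => single z (1 : R)) '' Z)).map (mapDomainAlgHom R R f) =
      Algebra.adjoin R ((fun z => single z (1 : R)) '' (f '' Z)) := by
  rw [AlgHom.map_adjoin, Set.image_image, Set.image_image]
  congr 1
  ext z
  simp [mapDomainAlgHom]

end AddMonoidAlgebra

theorem edgeRing_eq_adjoin {V : Type} [DecidableEq V] (k : Type) [Field k] (G : SignedGraph V) :
    edgeRing k G =
      Algebra.adjoin k ((fun z => AddMonoidAlgebra.single z (1 : k)) '' (G.rho '' ↑G.edges)) := by
  rw [edgeRing, Set.image_image]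
  rfl

theorem extHom_single {V : Type} [DecidableEq V] (v : V) (c : ℤ) :
    extHom (Pi.single v c) = Pi.single (Sum.inl v : V ⊕ (V × V)) c := by
  funext x
  cases x <;> simp [extHom, Pi.single_apply]

namespace MixedGraph

variable {V : Type} [DecidableEq V] (G : MixedGraph V)

def rhoSet : Set (V → ℤ) :=
  (fun e => G.sgn e • SignedGraph.endSum e) '' ↑G.sedges ∪ dirVec '' ↑G.dedges

theorem mixedEdgeRing_eq_adjoin (k : Type) [Field k] :
    mixedEdgeRing k G =
      Algebra.adjoin k ((fun z => AddMonoidAlgebra.single z (1 : k)) '' G.rhoSet) := by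
  rw [mixedEdgeRing, rhoSet, Set.image_union, Set.image_image, Set.image_image]
  rfl

/-- `ρ(-i t_d)` and `ρ(+t_d j)` for the two edges replacing `d = (i,j)` in the augmented graph. -/
def negVec (d : V × V) : (V ⊕ (V × V)) → ℤ :=
  -(Pi.single (Sum.inl d.1) 1 + Pi.single (Sum.inr d) 1)

def posVec (d : V × V) : (V ⊕ (V × V)) → ℤ :=
  Pi.single (Sum.inr d) 1 + Pi.single (Sum.inl d.2) 1

theorem extHom_dirVec (d : V × V) : extHom (dirVec d) = negVec d + posVec d := by
  rw [dirVec, map_sub, extHom_single, extHom_single, negVec, posVec]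
  abel

variable {G}

theorem augment_sgn_inl (e : Sym2 V) : G.augment.sgn (Sym2.map Sum.inl e) = G.sgn e := by
  induction e using Sym2.ind with
  | _ i j =>
    simp only [augment, Sym2.map_mk]
    rw [if_neg, if_neg]
    · rfl
    all_goals
      rintro ⟨d, -, h⟩
      rcases Sym2.eq_iff.1 h with ⟨h₁, h₂⟩ | ⟨h₁, h₂⟩ <;> simp_all

theorem augment_sgn_neg {d : V × V} (hd : d ∈ G.dedges) :
    G.augment.sgn s(Sum.inl d.1, Sum.inr d) = -1 := by
  simp only [augment]
  rw [if_pos ⟨d, hd, rfl⟩]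

theorem augment_sgn_pos (hG : ∀ d ∈ G.dedges, d.1 ≠ d.2) {d : V × V} (hd : d ∈ G.dedges) :
    G.augment.sgn s(Sum.inr d, Sum.inl d.2) = 1 := by
  simp only [augment]
  rw [if_neg, if_pos ⟨d, hd, rfl⟩]
  rintro ⟨d', hd', h⟩
  rcases Sym2.eq_iff.1 h with ⟨h₁, -⟩ | ⟨h₁, h₂⟩
  · simp at h₁
  · obtain rfl := Sum.inr.inj h₁
    exact hG d hd (Sum.inl.inj h₂).symm

theorem augment_rho_inl (e : Sym2 V) :
    G.augment.rho (Sym2.map Sum.inl e) = extHom (G.sgn e • SignedGraph.endSum e) := by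
  rw [SignedGraph.rho, augment_sgn_inl, map_zsmul]
  congr 1
  induction e using Sym2.ind with
  | _ i j =>
    rw [Sym2.map_mk]
    simp only [SignedGraph.endSum, Sym2.lift_mk, map_add, extHom_single]

theorem augment_rho_neg {d : V × V} (hd : d ∈ G.dedges) :
    G.augment.rho s(Sum.inl d.1, Sum.inr d) = negVec d := by
  rw [SignedGraph.rho, augment_sgn_neg hd, neg_one_smul]
  rfl

theorem augment_rho_pos (hG : ∀ d ∈ G.dedges, d.1 ≠ d.2) {d : V × V} (hd : d ∈ G.dedges) :
    G.augment.rho s(Sum.inr d, Sum.inl d.2) = posVec d := by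
  rw [SignedGraph.rho, augment_sgn_pos hG hd, one_smul]
  rfl

theorem mem_augment_edges {e : Sym2 (V ⊕ (V × V))} :
    e ∈ G.augment.edges ↔ (∃ e' ∈ G.sedges, Sym2.map Sum.inl e' = e) ∨
      (∃ d ∈ G.dedges, s(Sum.inl d.1, Sum.inr d) = e) ∨
      ∃ d ∈ G.dedges, s(Sum.inr d, Sum.inl d.2) = e := by
  simp only [augment, Finset.mem_union, Finset.mem_image, or_assoc]

variable (G) in
/-- Subtracting `z(t_d) • ρ(+t_d j)` for each directed edge `d`: a retraction onto the vectors
vanishing on the artificial vertices, which sends `ρ(-i t_d)` to `ρ((i,j))`. -/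
def clearArtificial : ((V ⊕ (V × V)) → ℤ) →+ ((V ⊕ (V × V)) → ℤ) where
  toFun z := z - ∑ d ∈ G.dedges, z (Sum.inr d) • posVec d
  map_zero' := by simp
  map_add' x y := by
    simp only [Pi.add_apply, add_smul, Finset.sum_add_distrib]
    abel

theorem clearArtificial_of_forall_inr_eq_zero {z : (V ⊕ (V × V)) → ℤ}
    (hz : ∀ d, z (Sum.inr d) = 0) : G.clearArtificial z = z := by
  simp [clearArtificial, hz]

theorem clearArtificial_posVec {d : V × V} (hd : d ∈ G.dedges) :
    G.clearArtificial (posVec d) = 0 := by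
  have hcoord : ∀ d', posVec d (Sum.inr d') = if d = d' then 1 else 0 := by
    intro d'
    simp [posVec, Pi.single_apply, eq_comm]
  simp [clearArtificial, hcoord, Finset.sum_ite_eq, hd]

theorem map_closure_augment_le (hG : ∀ d ∈ G.dedges, d.1 ≠ d.2) :
    (AddSubmonoid.closure (G.augment.rho '' ↑G.augment.edges)).map G.clearArtificial ≤
      AddSubmonoid.closure (extHom '' G.rhoSet) := by
  rw [AddSubmonoid.map_le_iff_le_comap, AddSubmonoid.closure_le]
  rintro _ ⟨x, hx, rfl⟩
  simp only [SetLike.mem_coe, AddSubmonoid.mem_comap]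
  rcases mem_augment_edges.1 hx with ⟨e, he, rfl⟩ | ⟨d, hd, rfl⟩ | ⟨d, hd, rfl⟩
  · rw [augment_rho_inl, clearArtificial_of_forall_inr_eq_zero fun _ => rfl]
    exact AddSubmonoid.subset_closure ⟨_, Or.inl ⟨e, he, rfl⟩, rfl⟩
  · have hneg : negVec d = extHom (dirVec d) - posVec d := by
      rw [extHom_dirVec, add_sub_cancel_right]
    rw [augment_rho_neg hd, hneg, map_sub, clearArtificial_posVec hd, sub_zero,
      clearArtificial_of_forall_inr_eq_zero fun _ => rfl]
    exact AddSubmonoid.subset_closure ⟨_, Or.inr ⟨d, hd, rfl⟩, rfl⟩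
  · rw [augment_rho_pos hG hd, clearArtificial_posVec hd]
    exact zero_mem _

theorem extHom_rhoSet_subset_closure_augment (hG : ∀ d ∈ G.dedges, d.1 ≠ d.2) :
    extHom '' G.rhoSet ⊆ AddSubmonoid.closure (G.augment.rho '' ↑G.augment.edges) := by
  rintro _ ⟨_, ⟨e, he, rfl⟩ | ⟨d, hd, rfl⟩, rfl⟩
  · rw [← augment_rho_inl]
    exact AddSubmonoid.subset_closure ⟨_, mem_augment_edges.2 (Or.inl ⟨e, he, rfl⟩), rfl⟩
  · rw [extHom_dirVec, ← augment_rho_neg hd, ← augment_rho_pos hG hd]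
    exact add_mem
      (AddSubmonoid.subset_closure ⟨_, mem_augment_edges.2 (Or.inr (Or.inl ⟨d, hd, rfl⟩)), rfl⟩)
      (AddSubmonoid.subset_closure ⟨_, mem_augment_edges.2 (Or.inr (Or.inr ⟨d, hd, rfl⟩)), rfl⟩)

theorem mem_closure_augment_and_forall_inr_eq_zero_iff (hG : ∀ d ∈ G.dedges, d.1 ≠ d.2)
    {z : (V ⊕ (V × V)) → ℤ} :
    (z ∈ AddSubmonoid.closure (G.augment.rho '' ↑G.augment.edges) ∧ ∀ d, z (Sum.inr d) = 0) ↔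
      z ∈ AddSubmonoid.closure (extHom '' G.rhoSet) := by
  constructor
  · rintro ⟨hz, hinr⟩
    rw [← clearArtificial_of_forall_inr_eq_zero hinr]
    exact map_closure_augment_le hG (AddSubmonoid.mem_map_of_mem _ hz)
  · intro hz
    refine ⟨AddSubmonoid.closure_le.2 (extHom_rhoSet_subset_closure_augment hG) hz, ?_⟩
    rw [← AddMonoidHom.map_mclosure] at hz
    obtain ⟨w, -, rfl⟩ := hz
    exact fun _ => rfl

end MixedGraph

open AddMonoidAlgebra MixedGraph in
/-- intersecting the edge ring of the augmented signed graph with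
the Laurent subring in the original variables recovers the edge ring of the
mixed graph. -/
theorem statement13 {V : Type} [DecidableEq V] (k : Type) [Field k]
    (G : MixedGraph V) (hG : G.Proper) :
    {a : AddMonoidAlgebra k ((V ⊕ (V × V)) → ℤ) |
        a ∈ edgeRing k G.augment ∧
          ∀ f ∈ (a.coeff : ((V ⊕ (V × V)) → ℤ) →₀ k).support, ∀ d : V × V, f (Sum.inr d) = 0} =
      (AddMonoidAlgebra.mapDomainAlgHom k k (extHom (V := V))) '' ↑(mixedEdgeRing k G) := by
  ext a
  rw [← Subalgebra.coe_map, mixedEdgeRing_eq_adjoin, map_mapDomainAlgHom_adjoin_single_one,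
    Set.mem_ofPred_eq, SetLike.mem_coe, edgeRing_eq_adjoin, mem_adjoin_single_one_iff,
    mem_adjoin_single_one_iff]
  simp only [Set.subset_def, SetLike.mem_coe, ← forall₂_and,
    mem_closure_augment_and_forall_inr_eq_zero_iff hG.2]
end

section
/- Let W be a reducing closed walk in a signed graph G, i.e., a closed walk of even length such that whenever an edge appears multiple times in W, the number of edges between consecutive occurrences is odd. Then there exist nonzero integer weights a_e on the edges of W such that sum_{e in W} a_e·rho(e) = 0. -/
open Finset

/-- a reducing closed walk carries nonzero integer edge weights
whose weighted sum of edge vectors vanishes. -/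
theorem statement19 {V : Type} [DecidableEq V] (G : SignedGraph V) (hsgn : G.Proper)
    {l : ℕ} (W : G.Walk l) (hW : W.ReducingClosedWalk) :
    ∃ a : Sym2 V → ℤ, (∀ e ∈ W.edgeFinset, a e ≠ 0) ∧ (∀ e ∉ W.edgeFinset, a e = 0) ∧
      ∑ e ∈ W.edgeFinset, a e • G.rho e = 0 := by
  classical
  obtain ⟨hcl, ⟨m, hm⟩, hodd⟩ := hW
  -- parity of positions of a repeated edge
  have parity : ∀ i j, i < l → j < l → W.edge i = W.edge j →
      ((-1 : ℤ)) ^ i = (-1) ^ j := by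
    have key : ∀ i j, i < j → j < l → W.edge i = W.edge j → ((-1 : ℤ)) ^ i = (-1) ^ j := by
      intro i j hij hjl he
      obtain ⟨k, hk⟩ := hodd i j hij hjl he
      have hj : j = i + (2 * k + 2) := by omega
      subst hj
      have h2 : ((-1 : ℤ)) ^ (2 * k + 2) = 1 := Even.neg_one_pow ⟨k + 1, by ring⟩
      rw [pow_add, h2, mul_one]
    intro i j hil hjl he
    rcases lt_trichotomy i j with h | h | h
    · exact key i j h hjl he
    · rw [h]
    · exact (key j i h hil he.symm).symm
  refine ⟨fun e => if e ∈ W.edgeFinset then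
      ∑ i ∈ Finset.range l, (if W.edge i = e then (-1 : ℤ) ^ i * G.sgn e else 0) else 0,
    ?_, ?_, ?_⟩
  · -- nonzero on the walk's edges
    intro e he
    simp only [he, if_true]
    obtain ⟨i0, hi0l, hi0⟩ := Finset.mem_image.mp he
    rw [Finset.mem_range] at hi0l
    rw [← Finset.sum_filter]
    have hcongr : ∀ i ∈ (Finset.range l).filter (fun i => W.edge i = e),
        (-1 : ℤ) ^ i * G.sgn e = (-1 : ℤ) ^ i0 * G.sgn e := by
      intro i hi
      rw [Finset.mem_filter, Finset.mem_range] at hi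
      rw [parity i i0 hi.1 hi0l (hi.2.trans hi0.symm)]
    rw [Finset.sum_congr rfl hcongr, Finset.sum_const, nsmul_eq_mul]
    have hcard : ((Finset.range l).filter (fun i => W.edge i = e)).card ≠ 0 := by
      exact Finset.card_ne_zero_of_mem (Finset.mem_filter.mpr ⟨Finset.mem_range.mpr hi0l, hi0⟩)
    have hsgne : G.sgn e ≠ 0 := by
      rcases hsgn e (hi0 ▸ W.mem i0 hi0l) with h | h <;> rw [h] <;> decide
    exact mul_ne_zero (Int.natCast_ne_zero.mpr hcard)
      (mul_ne_zero (pow_ne_zero _ (by decide)) hsgne)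
  · intro e he; simp [he]
  · -- the weighted sum vanishes
    have step1 : ∑ e ∈ W.edgeFinset, (if e ∈ W.edgeFinset then
        ∑ i ∈ Finset.range l, (if W.edge i = e then (-1 : ℤ) ^ i * G.sgn e else 0) else 0) • G.rho e
        = ∑ i ∈ Finset.range l, ((-1 : ℤ) ^ i * G.sgn (W.edge i)) • G.rho (W.edge i) := by
      rw [Finset.sum_congr rfl (fun e he => by rw [if_pos he])]
      have : ∀ e ∈ W.edgeFinset,
          (∑ i ∈ Finset.range l, (if W.edge i = e then (-1 : ℤ) ^ i * G.sgn e else 0)) • G.rho e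
          = ∑ i ∈ Finset.range l, (if W.edge i = e then ((-1 : ℤ) ^ i * G.sgn e) • G.rho e else 0) := by
        intro e _
        rw [Finset.sum_smul]
        exact Finset.sum_congr rfl fun i _ => by split <;> simp
      rw [Finset.sum_congr rfl this, Finset.sum_comm]
      refine Finset.sum_congr rfl fun i hi => ?_
      rw [Finset.mem_range] at hi
      have hmem : W.edge i ∈ W.edgeFinset :=
        Finset.mem_image.mpr ⟨i, Finset.mem_range.mpr hi, rfl⟩
      rw [Finset.sum_ite_eq W.edgeFinset (W.edge i)
        (fun e => ((-1 : ℤ) ^ i * G.sgn e) • G.rho e), if_pos hmem]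
    rw [step1]
    have step2 : ∀ i ∈ Finset.range l, ((-1 : ℤ) ^ i * G.sgn (W.edge i)) • G.rho (W.edge i)
        = ((-1 : ℤ) ^ i) • SignedGraph.endSum (W.edge i) := by
      intro i hi
      rw [Finset.mem_range] at hi
      have hone : G.sgn (W.edge i) * G.sgn (W.edge i) = 1 := by
        rcases hsgn (W.edge i) (W.mem i hi) with h | h <;> rw [h] <;> decide
      rw [SignedGraph.rho, smul_smul, mul_assoc, hone, mul_one]
    rw [Finset.sum_congr rfl step2]
    set f : ℕ → (V → ℤ) := fun i => ((-1 : ℤ)) ^ i • (Pi.single (W.vert i) 1 : V → ℤ) with hf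
    have step3 : ∀ i, ((-1 : ℤ) ^ i) • SignedGraph.endSum (W.edge i) = f i - f (i + 1) := by
      intro i
      simp only [hf, SignedGraph.Walk.edge, SignedGraph.endSum, Sym2.lift_mk, pow_succ,
        mul_smul, neg_smul, one_smul, smul_add, smul_neg, sub_neg_eq_add]
    have hl : ((-1 : ℤ)) ^ l = 1 := Even.neg_one_pow ⟨m, hm⟩
    have hcl' : W.vert l = W.vert 0 := hcl
    have hfl : f l = f 0 := by simp only [hf]; rw [hl, hcl', pow_zero, one_smul]
    rw [Finset.sum_congr rfl (fun i _ => step3 i), Finset.sum_range_sub' f, hfl, sub_self]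
end
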